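/- arXiv:1306.2529 — 10 statements merged into one kernel-verified Lean document; each statement's English description precedes it below -/
import Mathlib

section
/- Let d, m ≥ 1 be integers, let a and b be nonzero integers, let A = {a, a+b, ..., a+(m−1)b}, let A_d = {x ∈ A : d ∣ x}, and let k = gcd(d, b). If k divides a, then |A_d| = ⌊mk/d⌋ + ε_d, where ε_d = 1 if d ∤ mk and the residue of −(a/k)·(b/k)^{−1} modulo d/k (where (b/k)^{−1} is the multiplicative inverse of b/k modulo d/k) lies in the set {0, 1, ..., m − 1 − ⌊(m−1)k/d⌋·(d/k)}, and ε_d = 0 otherwise. -/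
/-!
Dividing `d`, `a` and `b` by `k = gcd(d, b)` turns `d ∣ a + i b` into `n ∣ a' + i b'` with
`n = d / k` coprime to `b'`, i.e. into the single congruence `i ≡ r (mod n)` with
`r = -a' b'⁻¹`. Since `i ↦ a + i b` is injective, `|A_d|` counts the `i < m` in that residue
class, which is `⌊m / n⌋` plus one exactly when `r < m mod n`; the latter happens iff `n ∤ m`
and `r ≤ (m - 1) mod n`.
-/

open Finset

lemma Int.dvd_add_mul_iff_ediv {k d a b : ℤ} (hk : k ≠ 0) (hd : k ∣ d) (ha : k ∣ a) (hb : k ∣ b)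
    (i : ℤ) : d ∣ a + i * b ↔ d / k ∣ a / k + i * (b / k) := by
  obtain ⟨d, rfl⟩ := hd
  obtain ⟨a, rfl⟩ := ha
  obtain ⟨b, rfl⟩ := hb
  simp only [Int.mul_ediv_cancel_left _ hk]
  rw [show k * a + i * (k * b) = k * (a + i * b) by ring, mul_dvd_mul_iff_left hk]

lemma ZMod.natCast_dvd_add_mul_iff_mod_eq {n : ℕ} [NeZero n] {a b : ℤ} (hb : IsCoprime b n)
    (i : ℕ) : (n : ℤ) ∣ a + i * b ↔ i % n = (((-a : ℤ) : ZMod n) * (b : ZMod n)⁻¹).val := by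
  rw [← ZMod.intCast_zmod_eq_zero_iff_dvd, ← ZMod.val_natCast, ZMod.val_injective n |>.eq_iff,
    ← ZMod.coe_unitOfIsCoprime b hb, ZMod.inv_coe_unit, Units.eq_mul_inv_iff_mul_eq]
  push_cast
  rw [ZMod.coe_unitOfIsCoprime, add_comm, ← eq_neg_iff_add_eq_zero]

lemma Nat.card_filter_range_mod_eq {n r : ℕ} (hr : r < n) (m : ℕ) :
    #{i ∈ range m | i % n = r} = m / n + if r < m % n then 1 else 0 := by
  simpa only [Nat.ModEq, Nat.count_eq_card_filter_range, Nat.mod_eq_of_lt hr] using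
    Nat.count_modEq_card m (r.zero_le.trans_lt hr) r

lemma ZMod.card_filter_range_dvd_add_mul {n : ℕ} [NeZero n] {a b : ℤ} (hb : IsCoprime b n)
    (m : ℕ) :
    #{i ∈ range m | (n : ℤ) ∣ a + ((i : ℕ) : ℤ) * b} =
      m / n + if (((-a : ℤ) : ZMod n) * (b : ZMod n)⁻¹).val < m % n then 1 else 0 := by
  simp_rw [natCast_dvd_add_mul_iff_mod_eq hb]
  exact Nat.card_filter_range_mod_eq (ZMod.val_lt _) m

lemma Nat.lt_mod_iff_not_dvd_and_le_sub_one_mod {m n r : ℕ} :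
    r < m % n ↔ ¬ n ∣ m ∧ r ≤ (m - 1) % n := by
  rcases m with _ | m
  · simp
  rcases lt_trichotomy n 1 with hn | rfl | hn
  · obtain rfl : n = 0 := by omega
    simp
  · simp [Nat.mod_one]
  have := Nat.mod_lt m (by omega : 0 < n)
  rw [Nat.add_sub_cancel, Nat.dvd_iff_mod_eq_zero, Nat.add_mod_eq_ite, Nat.mod_eq_of_lt hn]
  split_ifs <;> grind

theorem card_filter_dvd_arith_prog_of_gcd_dvd_general
    (d m : ℕ) (hd : 1 ≤ d) (a b : ℤ) (hb : b ≠ 0)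
    (h : ((Int.gcd (d : ℤ) b : ℤ) ∣ a)) :
    (((Finset.range m).image (fun i : ℕ => a + (i : ℤ) * b)).filter
      (fun x => (d : ℤ) ∣ x)).card =
    m * Int.gcd (d : ℤ) b / d +
      (if ¬ (d ∣ m * Int.gcd (d : ℤ) b) ∧
          (((-(a / (Int.gcd (d : ℤ) b : ℤ)) : ℤ) : ZMod (d / Int.gcd (d : ℤ) b)) *
            (((b / (Int.gcd (d : ℤ) b : ℤ)) : ℤ) : ZMod (d / Int.gcd (d : ℤ) b))⁻¹).val ≤
            m - 1 - (m - 1) * Int.gcd (d : ℤ) b / d * (d / Int.gcd (d : ℤ) b)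
        then 1 else 0) := by
  set k := Int.gcd (d : ℤ) b
  have hk : 0 < k := Int.gcd_pos_of_ne_zero_right _ hb
  have hkd : k ∣ d := Int.natCast_dvd_natCast.mp (Int.gcd_dvd_left _ _)
  have : NeZero (d / k) := ⟨(Nat.div_pos (Nat.le_of_dvd hd hkd) hk).ne'⟩
  have hcop : IsCoprime (b / k) ((d / k : ℕ) : ℤ) := by
    rw [Int.isCoprime_iff_gcd_eq_one, Int.gcd_comm, Int.natCast_div]
    exact Int.gcd_ediv_gcd_ediv_gcd hk
  have hinj : Function.Injective (fun i : ℕ => a + i * b) := fun i j hij => by simpa [hb] using hij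
  have hdiv (x : ℕ) : x * k / d = x / (d / k) := by
    rw [← Nat.mul_div_mul_right x (d / k) hk, Nat.div_mul_cancel hkd]
  have hdvd : d ∣ m * k ↔ d / k ∣ m := by
    conv_rhs => rw [← Nat.mul_dvd_mul_iff_right hk, Nat.div_mul_cancel hkd]
  rw [filter_image, card_image_of_injective _ hinj]
  simp_rw [Int.dvd_add_mul_iff_ediv (Nat.cast_ne_zero.mpr hk.ne') (Int.natCast_dvd_natCast.mpr hkd)
    h (Int.gcd_dvd_right _ _), ← Int.natCast_div]
  rw [ZMod.card_filter_range_dvd_add_mul hcop, hdiv, hdiv]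
  simp only [hdvd, ← Nat.mod_eq_sub_div_mul, ← Nat.lt_mod_iff_not_dvd_and_le_sub_one_mod]

/-- Lemma 1(ii): For integers `d, m ≥ 1` and nonzero integers `a, b`, let
`A = {a, a+b, …, a+(m−1)b}`, `A_d = {x ∈ A : d ∣ x}` and `k = gcd(d, b)`.
If `k ∣ a` then `|A_d| = ⌊mk/d⌋ + ε_d`, where `ε_d = 1` if `d ∤ mk` and the
residue of `−(a/k)·(b/k)⁻¹` modulo `d/k` lies in
`{0, 1, …, m − 1 − ⌊(m−1)k/d⌋·(d/k)}`, and `ε_d = 0` otherwise. -/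
theorem card_filter_dvd_arith_prog_of_gcd_dvd
    (d m : ℕ) (hd : 1 ≤ d) (hm : 1 ≤ m) (a b : ℤ) (ha : a ≠ 0) (hb : b ≠ 0)
    (h : ((Int.gcd (d : ℤ) b : ℤ) ∣ a)) :
    (((Finset.range m).image (fun i : ℕ => a + (i : ℤ) * b)).filter
      (fun x => (d : ℤ) ∣ x)).card =
    m * Int.gcd (d : ℤ) b / d +
      (if ¬ (d ∣ m * Int.gcd (d : ℤ) b) ∧
          (((-(a / (Int.gcd (d : ℤ) b : ℤ)) : ℤ) : ZMod (d / Int.gcd (d : ℤ) b)) *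
            (((b / (Int.gcd (d : ℤ) b : ℤ)) : ℤ) : ZMod (d / Int.gcd (d : ℤ) b))⁻¹).val ≤
            m - 1 - (m - 1) * Int.gcd (d : ℤ) b / d * (d / Int.gcd (d : ℤ) b)
        then 1 else 0) :=
  card_filter_dvd_arith_prog_of_gcd_dvd_general d m hd a b hb h
end

section
/- Let m, a, b be positive integers with gcd(a, b) = 1, and let f^{(a,b)}(m) denote the number of nonempty subsets A of {a, a+b, ..., a+(m−1)b} with gcd(A) = 1. Then f^{(a,b)}(m) = Σ_{d=1, gcd(d,b)=1}^{a+(m−1)b} μ(d)·(2^{⌊m/d⌋+ε_d} − 1), where ε_d = 1 if d ∤ m and the residue of −a·b^{−1} modulo d lies in {0, 1, ..., m − ⌊m/d⌋·d − 1} (b^{−1} being the multiplicative inverse of b modulo d), and ε_d = 0 otherwise. -/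
private lemma sum_moebius_divisors (n : ℕ) :
    ∑ d ∈ n.divisors, (ArithmeticFunction.moebius d : ℤ) = if n = 1 then 1 else 0 := by
  have h : ((ArithmeticFunction.moebius * ArithmeticFunction.zeta : ArithmeticFunction ℤ)) n
      = (1 : ArithmeticFunction ℤ) n := by
    rw [ArithmeticFunction.moebius_mul_coe_zeta]
  rw [ArithmeticFunction.coe_mul_zeta_apply, ArithmeticFunction.one_apply] at h
  exact h

/-- Theorem (Ayad–Kihel): For positive integers `m, a, b` with `gcd(a,b) = 1`,
the number `f^{(a,b)}(m)` of relatively prime nonempty subsets of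
`{a, a+b, …, a+(m−1)b}` equals
`Σ_{d=1, gcd(d,b)=1}^{a+(m−1)b} μ(d)·(2^{⌊m/d⌋+ε_d} − 1)`. -/
theorem card_relPrime_subsets_arith_prog
    (m a b : ℕ) (hm : 0 < m) (ha : 0 < a) (hb : 0 < b) (hab : Nat.gcd a b = 1) :
    (((((Finset.range m).image (fun i => a + i * b)).powerset).filter
        (fun A => A.Nonempty ∧ A.gcd id = 1)).card : ℤ) =
    ∑ d ∈ (Finset.Icc 1 (a + (m - 1) * b)).filter (fun d => Nat.gcd d b = 1),
      ArithmeticFunction.moebius d *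
        (2 ^ (m / d +
          (if ¬ (d ∣ m) ∧ ((-(a : ZMod d)) * (b : ZMod d)⁻¹).val < m - m / d * d
            then 1 else 0)) - 1) := by
  set M := a + (m - 1) * b with hM
  set S := (Finset.range m).image (fun i => a + i * b) with hS
  have hS_mem : ∀ x ∈ S, 0 < x ∧ x ≤ M := by
    intro x hx
    simp only [hS, Finset.mem_image, Finset.mem_range] at hx
    obtain ⟨i, hi, rfl⟩ := hx
    refine ⟨by omega, ?_⟩
    have : i ≤ m - 1 := by omega
    have := Nat.mul_le_mul_right b this
    omega
  set N : ℕ → ℕ := fun d => (S.filter (fun x => d ∣ x)).card with hN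
  -- N d for coprime d
  have hN_coprime : ∀ d : ℕ, 0 < d → Nat.gcd d b = 1 →
      N d = m / d +
        (if ¬ (d ∣ m) ∧ ((-(a : ZMod d)) * (b : ZMod d)⁻¹).val < m - m / d * d
          then 1 else 0) := by
    intro d hd hdb
    haveI : NeZero d := ⟨hd.ne'⟩
    set r := ((-(a : ZMod d)) * (b : ZMod d)⁻¹).val with hr
    have hrd : r < d := ZMod.val_lt _
    have hinj : Set.InjOn (fun i => a + i * b) (Finset.range m) := by
      intro x _ y _ h
      simp only at h
      have : x * b = y * b := by omega
      exact Nat.eq_of_mul_eq_mul_right hb this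
    have h1 : N d = ((Finset.range m).filter (fun i => d ∣ a + i * b)).card := by
      simp only [hN, hS]
      rw [Finset.filter_image, Finset.card_image_of_injOn
        (hinj.mono (Finset.filter_subset _ _))]
    have hbu : IsUnit (b : ZMod d) := by
      rw [ZMod.isUnit_iff_coprime]
      exact Nat.coprime_comm.mp hdb
    have hbinv : (b : ZMod d) * (b : ZMod d)⁻¹ = 1 := ZMod.mul_inv_of_unit _ hbu
    have key : ∀ x : ZMod d, (a : ZMod d) + x * b = 0 ↔
        x = (-(a : ZMod d)) * (b : ZMod d)⁻¹ := by
      intro x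
      constructor
      · intro h
        have hxb : x * (b : ZMod d) = -(a : ZMod d) := by linear_combination h
        calc x = x * ((b : ZMod d) * (b : ZMod d)⁻¹) := by rw [hbinv, mul_one]
          _ = x * (b : ZMod d) * (b : ZMod d)⁻¹ := by ring
          _ = -(a : ZMod d) * (b : ZMod d)⁻¹ := by rw [hxb]
      · intro h
        subst h
        have h2 : -(a : ZMod d) * (b : ZMod d)⁻¹ * b = -(a : ZMod d) := by
          calc -(a : ZMod d) * (b : ZMod d)⁻¹ * b
              = -(a : ZMod d) * ((b : ZMod d) * (b : ZMod d)⁻¹) := by ring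
            _ = -(a : ZMod d) := by rw [hbinv, mul_one]
        rw [h2]; ring
    have h2 : ∀ i : ℕ, (d ∣ a + i * b) ↔ i ≡ r [MOD d] := by
      intro i
      rw [← ZMod.natCast_eq_zero_iff, ← ZMod.natCast_eq_natCast_iff]
      have hrv : ((r : ℕ) : ZMod d) = (-(a : ZMod d)) * (b : ZMod d)⁻¹ := by
        rw [hr, ZMod.natCast_zmod_val]
      rw [hrv]
      push_cast
      exact key (i : ZMod d)
    have h3 : (Finset.range m).filter (fun i => d ∣ a + i * b)
        = (Finset.range m).filter (fun i => i ≡ r [MOD d]) := by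
      apply Finset.filter_congr
      intro i _
      simp [h2 i]
    rw [h1, h3, ← Nat.count_eq_card_filter_range, Nat.count_modEq_card m hd r,
      Nat.mod_eq_of_lt hrd]
    have hmd : m - m / d * d = m % d := by
      have h4 : m / d * d + m % d = m := Nat.div_add_mod' m d
      exact Nat.sub_eq_of_eq_add (by omega)
    rw [hmd]
    congr 1
    by_cases hdm : d ∣ m
    · have hm0 : m % d = 0 := Nat.mod_eq_zero_of_dvd hdm
      simp [hdm, hm0]
    · simp [hdm]
  -- N d = 0 for non-coprime d
  have hN_zero : ∀ d : ℕ, Nat.gcd d b ≠ 1 → N d = 0 := by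
    intro d hdb
    simp only [hN]
    rw [Finset.card_eq_zero, Finset.filter_eq_empty_iff]
    intro x hx
    simp only [hS, Finset.mem_image, Finset.mem_range] at hx
    obtain ⟨i, hi, rfl⟩ := hx
    intro hdvd
    apply hdb
    have h2 : Nat.gcd d b ∣ a + i * b := dvd_trans (Nat.gcd_dvd_left d b) hdvd
    have h3 : Nat.gcd d b ∣ i * b := Dvd.dvd.mul_left (Nat.gcd_dvd_right d b) i
    have h1 : Nat.gcd d b ∣ a := by
      have := Nat.dvd_sub h2 h3
      simpa using this
    have := Nat.dvd_gcd h1 (Nat.gcd_dvd_right d b)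
    rw [hab] at this
    exact Nat.dvd_one.mp this
  -- nonempty divisible-subset count
  have hcount : ∀ d : ℕ,
      ((S.powerset.filter (fun A => A.Nonempty)).filter (fun A => d ∣ A.gcd id)).card
        = 2 ^ (N d) - 1 := by
    intro d
    have heq : (S.powerset.filter (fun A => A.Nonempty)).filter (fun A => d ∣ A.gcd id)
        = ((S.filter (fun x => d ∣ x)).powerset).filter (fun A => A.Nonempty) := by
      ext A
      constructor
      · intro hA
        rw [Finset.mem_filter, Finset.mem_filter, Finset.mem_powerset] at hA
        rw [Finset.mem_filter, Finset.mem_powerset]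
        obtain ⟨⟨hsub, hne⟩, hdvd⟩ := hA
        exact ⟨fun x hx => Finset.mem_filter.mpr
          ⟨hsub hx, dvd_trans hdvd (Finset.gcd_dvd hx)⟩, hne⟩
      · intro hA
        rw [Finset.mem_filter, Finset.mem_powerset] at hA
        rw [Finset.mem_filter, Finset.mem_filter, Finset.mem_powerset]
        obtain ⟨hsub, hne⟩ := hA
        exact ⟨⟨fun x hx => (Finset.mem_filter.mp (hsub hx)).1, hne⟩,
          Finset.dvd_gcd (fun x hx => (Finset.mem_filter.mp (hsub hx)).2)⟩
    rw [heq]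
    have h5 : ((S.filter (fun x => d ∣ x)).powerset).filter (fun A => A.Nonempty)
        = ((S.filter (fun x => d ∣ x)).powerset).erase ∅ := by
      ext A
      simp [Finset.nonempty_iff_ne_empty, and_comm]
    rw [h5, Finset.card_erase_of_mem (Finset.empty_mem_powerset _), Finset.card_powerset]
  -- main computation
  set P := S.powerset.filter (fun A => A.Nonempty) with hP
  have hstep1 : ((S.powerset.filter (fun A => A.Nonempty ∧ A.gcd id = 1)).card : ℤ)
      = ∑ A ∈ P, (if A.gcd id = 1 then (1 : ℤ) else 0) := by
    rw [← Finset.filter_filter, Finset.card_filter]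
    push_cast
    rfl
  have hstep2 : ∀ A ∈ P, (if A.gcd id = 1 then (1 : ℤ) else 0)
      = ∑ d ∈ Finset.Icc 1 M, (if d ∣ A.gcd id then (ArithmeticFunction.moebius d : ℤ) else 0) := by
    intro A hA
    simp only [hP, Finset.mem_filter, Finset.mem_powerset] at hA
    obtain ⟨hsub, x, hx⟩ := hA
    obtain ⟨hx1, hx2⟩ := hS_mem x (hsub hx)
    have hgdvd : A.gcd id ∣ x := Finset.gcd_dvd hx
    have hg0 : A.gcd id ≠ 0 := by
      intro h
      rw [h] at hgdvd
      exact absurd (zero_dvd_iff.mp hgdvd) (by omega)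
    have hgM : A.gcd id ≤ M := le_trans (Nat.le_of_dvd hx1 hgdvd) hx2
    rw [← sum_moebius_divisors, ← Finset.sum_filter]
    congr 1
    ext e
    simp only [Finset.mem_filter, Finset.mem_Icc, Nat.mem_divisors]
    constructor
    · rintro ⟨hed, -⟩
      have he0 : e ≠ 0 := by
        intro h; rw [h] at hed; exact hg0 (zero_dvd_iff.mp hed)
      exact ⟨⟨by omega, le_trans (Nat.le_of_dvd (Nat.pos_of_ne_zero hg0) hed) hgM⟩, hed⟩
    · rintro ⟨⟨he1, heM⟩, hed⟩
      exact ⟨hed, hg0⟩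
  rw [hstep1, Finset.sum_congr rfl hstep2, Finset.sum_comm]
  have hstep3 : ∀ d ∈ Finset.Icc 1 M,
      (∑ A ∈ P, if d ∣ A.gcd id then (ArithmeticFunction.moebius d : ℤ) else 0)
      = ArithmeticFunction.moebius d * (2 ^ (N d) - 1) := by
    intro d hd
    rw [← Finset.sum_filter, Finset.sum_const, hcount d]
    have h6 : (1 : ℕ) ≤ 2 ^ (N d) := Nat.one_le_two_pow
    rw [nsmul_eq_mul]
    push_cast [h6]
    ring
  rw [Finset.sum_congr rfl hstep3, Finset.sum_filter]
  apply Finset.sum_congr rfl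
  intro d hd
  simp only [Finset.mem_Icc] at hd
  by_cases hdb : Nat.gcd d b = 1
  · rw [if_pos hdb, hN_coprime d (by omega) hdb]
  · rw [if_neg hdb, hN_zero d hdb]
    simp
end

section
/- Let m, a, b, k be positive integers with gcd(a, b) = 1, and let f_k^{(a,b)}(m) denote the number of subsets A of {a, a+b, ..., a+(m−1)b} with |A| = k and gcd(A) = 1. Then f_k^{(a,b)}(m) = Σ_{d=1, gcd(d,b)=1}^{a+(m−1)b} μ(d)·C(⌊m/d⌋+ε_d, k), where C(n, k) is the binomial coefficient, and ε_d = 1 if d ∤ m and the residue of −a·b^{−1} modulo d lies in {0, 1, ..., m − ⌊m/d⌋·d − 1} (b^{−1} being the multiplicative inverse of b modulo d), and ε_d = 0 otherwise. -/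
lemma sumMoebiusDiv (g : ℕ) : ∑ d ∈ g.divisors, (ArithmeticFunction.moebius d : ℤ) = if g = 1 then 1 else 0 := by
  have h := congrArg (fun f : ArithmeticFunction ℤ => f g) ArithmeticFunction.moebius_mul_coe_zeta
  simp only [ArithmeticFunction.coe_mul_zeta_apply, ArithmeticFunction.one_apply] at h
  exact h

lemma countRes (d r : ℕ) (hd : 0 < d) (hr : r < d) (m : ℕ) :
    ((Finset.range m).filter (fun i => i % d = r)).card
      = m / d + if r < m % d then 1 else 0 := by
  induction m with
  | zero => simp
  | succ n ih =>
    rw [Finset.range_add_one, Finset.filter_insert]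
    have hs : n % d < d := Nat.mod_lt _ hd
    have hdm : d * (n / d) + n % d = n := Nat.div_add_mod n d
    by_cases hc : n % d + 1 = d
    · have key : n + 1 = d * (n / d + 1) := by
        have : d * (n / d + 1) = d * (n / d) + d := by ring
        omega
      have h1 : (n+1) % d = 0 := by rw [key]; exact Nat.mul_mod_right _ _
      have h2 : (n+1) / d = n / d + 1 := by rw [key]; exact Nat.mul_div_cancel_left _ hd
      rw [h1, h2]
      by_cases he : n % d = r
      · rw [if_pos he, Finset.card_insert_of_notMem (by simp), ih]
        split_ifs <;> omega
      · rw [if_neg he, ih]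
        split_ifs <;> omega
    · have key : n + 1 = (n % d + 1) + d * (n / d) := by omega
      have h1 : (n+1) % d = n % d + 1 := by
        rw [key, Nat.add_mul_mod_self_left, Nat.mod_eq_of_lt (by omega)]
      have h2 : (n+1) / d = n / d := by
        rw [key, Nat.add_mul_div_left _ _ hd, Nat.div_eq_of_lt (by omega), Nat.zero_add]
      rw [h1, h2]
      by_cases he : n % d = r
      · rw [if_pos he, Finset.card_insert_of_notMem (by simp), ih]
        split_ifs <;> omega
      · rw [if_neg he, ih]
        split_ifs <;> omega

lemma dvdChar (d a b i : ℕ) (hd : 0 < d) (hdb : Nat.gcd d b = 1) :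
    d ∣ a + i * b ↔ i % d = ((-(a : ZMod d)) * (b : ZMod d)⁻¹).val := by
  haveI : NeZero d := ⟨hd.ne'⟩
  have hbu : IsUnit (b : ZMod d) :=
    (ZMod.isUnit_iff_coprime b d).mpr (Nat.coprime_comm.mp hdb)
  have step1 : d ∣ a + i * b ↔ ((i : ZMod d) = (-(a : ZMod d)) * (b : ZMod d)⁻¹) := by
    rw [← ZMod.natCast_eq_zero_iff]
    push_cast
    constructor
    · intro h
      have : (i : ZMod d) * b * (b : ZMod d)⁻¹ = -(a : ZMod d) * (b : ZMod d)⁻¹ := by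
        rw [show (i : ZMod d) * b = -(a:ZMod d) by linear_combination h]
      rwa [mul_assoc, ZMod.mul_inv_of_unit _ hbu, mul_one] at this
    · intro h
      rw [h]
      rw [mul_assoc, ZMod.inv_mul_of_unit _ hbu, mul_one]
      ring
  rw [step1]
  constructor
  · intro h
    rw [← ZMod.val_natCast, h]
  · intro h
    have : ((i % d : ℕ) : ZMod d) = (((((-(a : ZMod d)) * (b : ZMod d)⁻¹).val : ℕ)) : ZMod d) := by
      exact_mod_cast congrArg (fun x : ℕ => (x : ZMod d)) h
    rwa [ZMod.natCast_mod, ZMod.natCast_val, ZMod.cast_id] at this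

/-- Theorem (Ayad–Kihel): For positive integers `m, a, b, k` with `gcd(a,b) = 1`,
the number `f_k^{(a,b)}(m)` of relatively prime subsets of cardinality `k` of
`{a, a+b, …, a+(m−1)b}` equals
`Σ_{d=1, gcd(d,b)=1}^{a+(m−1)b} μ(d)·C(⌊m/d⌋+ε_d, k)`. -/
theorem card_relPrime_subsets_card_eq_arith_prog
    (m a b k : ℕ) (hm : 0 < m) (ha : 0 < a) (hb : 0 < b) (hk : 0 < k)
    (hab : Nat.gcd a b = 1) :
    (((((Finset.range m).image (fun i => a + i * b)).powerset).filter
        (fun A => A.card = k ∧ A.gcd id = 1)).card : ℤ) =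
    ∑ d ∈ (Finset.Icc 1 (a + (m - 1) * b)).filter (fun d => Nat.gcd d b = 1),
      ArithmeticFunction.moebius d *
        ((m / d +
          (if ¬ (d ∣ m) ∧ ((-(a : ZMod d)) * (b : ZMod d)⁻¹).val < m - m / d * d
            then 1 else 0)).choose k : ℤ) := by
  set f : ℕ → ℕ := fun i => a + i * b with hf
  set P : Finset ℕ := (Finset.range m).image f with hP
  set M : ℕ := a + (m - 1) * b with hM
  have hfinj : Function.Injective f := by
    intro i j h
    simp only [hf] at h
    have : i * b = j * b := by omega
    exact Nat.eq_of_mul_eq_mul_right hb this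
  have hPM : ∀ x ∈ P, 1 ≤ x ∧ x ≤ M := by
    intro x hx
    simp only [hP, Finset.mem_image, Finset.mem_range] at hx
    obtain ⟨i, hi, rfl⟩ := hx
    refine ⟨by simp [hf]; omega, ?_⟩
    simp only [hf, hM]
    exact Nat.add_le_add_left (Nat.mul_le_mul_right b (by omega)) a
  have h1 : (P.powerset.filter (fun A => A.card = k ∧ A.gcd id = 1))
      = (Finset.powersetCard k P).filter (fun A => A.gcd id = 1) := by
    rw [Finset.powersetCard_eq_filter, Finset.filter_filter]
  have h2 : ∀ A ∈ Finset.powersetCard k P,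
      (if A.gcd id = 1 then (1:ℤ) else 0)
        = ∑ d ∈ Finset.Icc 1 M, (if d ∣ A.gcd id then (ArithmeticFunction.moebius d : ℤ) else 0) := by
    intro A hA
    rw [Finset.mem_powersetCard] at hA
    have hne : A.Nonempty := Finset.card_pos.mp (by omega)
    obtain ⟨x, hx⟩ := hne
    have hxP := hPM x (hA.1 hx)
    have hgd : A.gcd id ∣ x := Finset.gcd_dvd hx
    have hg0 : A.gcd id ≠ 0 := by
      intro h; rw [h] at hgd; have := Nat.eq_zero_of_zero_dvd hgd; omega
    have hgM : A.gcd id ≤ M := le_trans (Nat.le_of_dvd (by omega) hgd) hxP.2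
    have hdivs : (A.gcd id).divisors = (Finset.Icc 1 M).filter (fun d => d ∣ A.gcd id) := by
      ext e
      simp only [Nat.mem_divisors, Finset.mem_filter, Finset.mem_Icc]
      constructor
      · rintro ⟨he, -⟩
        have he1 : e ≠ 0 := by rintro rfl; exact hg0 (Nat.eq_zero_of_zero_dvd he)
        exact ⟨⟨by omega, le_trans (Nat.le_of_dvd (Nat.pos_of_ne_zero hg0) he) hgM⟩, he⟩
      · rintro ⟨-, he⟩; exact ⟨he, hg0⟩
    rw [← sumMoebiusDiv (A.gcd id), hdivs, Finset.sum_filter]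
  have h4 : ∀ d, 0 < d →
      ((Finset.powersetCard k P).filter (fun A => d ∣ A.gcd id))
        = Finset.powersetCard k (P.filter (fun x => d ∣ x)) := by
    intro d hd
    ext A
    simp only [Finset.mem_filter, Finset.mem_powersetCard, Finset.dvd_gcd_iff,
      Finset.subset_iff, id]
    constructor
    · rintro ⟨⟨hsub, hcard⟩, hdvd⟩
      exact ⟨fun x hx => ⟨hsub hx, hdvd x hx⟩, hcard⟩
    · rintro ⟨hsub, hcard⟩
      exact ⟨⟨fun _ hx => (hsub hx).1, hcard⟩, fun x hx => (hsub hx).2⟩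
  calc (((P.powerset.filter (fun A => A.card = k ∧ A.gcd id = 1)).card : ℕ) : ℤ)
      = ∑ A ∈ Finset.powersetCard k P, (if A.gcd id = 1 then (1:ℤ) else 0) := by
        rw [h1, Finset.card_filter]
        push_cast
        rfl
    _ = ∑ A ∈ Finset.powersetCard k P, ∑ d ∈ Finset.Icc 1 M,
          (if d ∣ A.gcd id then (ArithmeticFunction.moebius d : ℤ) else 0) :=
        Finset.sum_congr rfl h2
    _ = ∑ d ∈ Finset.Icc 1 M, ∑ A ∈ Finset.powersetCard k P,
          (if d ∣ A.gcd id then (ArithmeticFunction.moebius d : ℤ) else 0) := Finset.sum_comm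
    _ = ∑ d ∈ Finset.Icc 1 M, (ArithmeticFunction.moebius d : ℤ) *
          ((((P.filter (fun x => d ∣ x)).card).choose k : ℕ) : ℤ) := by
        refine Finset.sum_congr rfl (fun d hd => ?_)
        have hd1 : 0 < d := by simp [Finset.mem_Icc] at hd; omega
        rw [← Finset.sum_filter, Finset.sum_const, h4 d hd1, Finset.card_powersetCard,
          nsmul_eq_mul]
        ring
    _ = ∑ d ∈ (Finset.Icc 1 M).filter (fun d => Nat.gcd d b = 1),
          ArithmeticFunction.moebius d *
            ((m / d +
              (if ¬ (d ∣ m) ∧ ((-(a : ZMod d)) * (b : ZMod d)⁻¹).val < m - m / d * d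
                then 1 else 0)).choose k : ℤ) := by
        rw [Finset.sum_filter]
        refine Finset.sum_congr rfl (fun d hd => ?_)
        have hd1 : 0 < d := by simp [Finset.mem_Icc] at hd; omega
        by_cases hdb : Nat.gcd d b = 1
        · rw [if_pos hdb]
          haveI : NeZero d := ⟨hd1.ne'⟩
          have hmd : m - m / d * d = m % d := by
            rw [Nat.mul_comm]
            exact Nat.sub_eq_of_eq_add (Nat.mod_add_div m d).symm
          have hiff : (¬ (d ∣ m) ∧ ((-(a : ZMod d)) * (b : ZMod d)⁻¹).val < m % d)
              ↔ ((-(a : ZMod d)) * (b : ZMod d)⁻¹).val < m % d := by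
            constructor
            · exact fun h => h.2
            · intro h
              refine ⟨fun hdm => ?_, h⟩
              rw [(Nat.dvd_iff_mod_eq_zero).mp hdm] at h
              omega
          have hN : (P.filter (fun x => d ∣ x)).card
              = m / d + (if ¬ (d ∣ m) ∧ ((-(a : ZMod d)) * (b : ZMod d)⁻¹).val < m - m / d * d
                  then 1 else 0) := by
            rw [hP, Finset.filter_image, Finset.card_image_of_injective _ hfinj,
              Finset.filter_congr (fun i _ => by rw [dvdChar d a b i hd1 hdb]),
              countRes d _ hd1 (ZMod.val_lt _) m, hmd]
            simp only [hiff]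
          rw [hN]
        · rw [if_neg hdb]
          have hempty : P.filter (fun x => d ∣ x) = ∅ := by
            rw [Finset.filter_eq_empty_iff]
            intro x hx
            simp only [hP, Finset.mem_image, Finset.mem_range] at hx
            obtain ⟨i, hi, rfl⟩ := hx
            intro hdx
            have hg := Nat.gcd_dvd_left d b
            have hgb := Nat.gcd_dvd_right d b
            have h1 : Nat.gcd d b ∣ a + i * b := dvd_trans hg hdx
            have h2 : Nat.gcd d b ∣ i * b := Dvd.dvd.mul_left hgb i
            have h3 : Nat.gcd d b ∣ a := by
              have := Nat.dvd_sub h1 h2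
              simpa [hf] using this
            have h4 : Nat.gcd d b ∣ Nat.gcd a b := Nat.dvd_gcd h3 hgb
            rw [hab] at h4
            exact hdb (Nat.eq_one_of_dvd_one h4)
          rw [hempty]
          simp [Nat.choose_eq_zero_of_lt hk]
end

section
/- Let m, n, a, b be positive integers with gcd(a, b) = 1, and let Φ^{(a,b)}(m, n) denote the number of nonempty subsets A of {a, a+b, ..., a+(m−1)b} with gcd(A ∪ {n}) = 1. Then Φ^{(a,b)}(m, n) = Σ_{d ∣ n, gcd(b,d)=1} μ(d)·(2^{⌊m/d⌋+ε_d} − 1), where ε_d = 1 if d ∤ m and the residue of −a·b^{−1} modulo d lies in {0, 1, ..., m − ⌊m/d⌋·d − 1} (b^{−1} being the multiplicative inverse of b modulo d), and ε_d = 0 otherwise. -/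
open Finset

private lemma aux_subset_filter {α : Type*} {s t : Finset α} {p : α → Prop}
    [DecidablePred p] : s ⊆ t.filter p ↔ s ⊆ t ∧ ∀ x ∈ s, p x :=
  ⟨fun h => ⟨fun x hx => (Finset.mem_filter.mp (h hx)).1,
      fun x hx => (Finset.mem_filter.mp (h hx)).2⟩,
    fun ⟨h1, h2⟩ x hx => Finset.mem_filter.mpr ⟨h1 hx, h2 x hx⟩⟩

private lemma aux_count_mod (d : ℕ) (hd : 0 < d) (r : ℕ) (hr : r < d) (m : ℕ) :
    ((Finset.range m).filter (fun i => i % d = r)).card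
      = m / d + if r < m % d then 1 else 0 := by
  induction m with
  | zero => simp
  | succ m ih =>
    have hmod : (m + 1) % d = (m % d + 1) % d := (Nat.mod_add_mod m d 1).symm
    have hlt : m % d < d := Nat.mod_lt _ hd
    have hdvd : d ∣ m + 1 ↔ m % d = d - 1 := by
      rw [Nat.dvd_iff_mod_eq_zero, hmod]
      rcases Nat.lt_or_ge (m % d + 1) d with h | h
      · rw [Nat.mod_eq_of_lt h]; omega
      · have he : m % d + 1 = d := by omega
        rw [he, Nat.mod_self]; omega
    have h2 : (m % d = d - 1 ∧ (m + 1) % d = 0)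
        ∨ (m % d < d - 1 ∧ (m + 1) % d = m % d + 1) := by
      by_cases hc : m % d = d - 1
      · left
        refine ⟨hc, ?_⟩
        rw [hmod, hc, Nat.sub_add_cancel hd, Nat.mod_self]
      · right
        exact ⟨by omega, by rw [hmod, Nat.mod_eq_of_lt (by omega)]⟩
    rw [Finset.range_add_one, Finset.filter_insert, Nat.succ_div]
    simp only [hdvd]
    by_cases hp : m % d = r
    · rw [if_pos hp, Finset.card_insert_of_notMem (by simp), ih]
      split_ifs <;> omega
    · rw [if_neg hp, ih]
      split_ifs <;> omega

private lemma aux_dvd_prog_iff (d a b i : ℕ) [NeZero d] (hbd : Nat.gcd b d = 1) :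
    d ∣ a + i * b ↔ i % d = ((-(a : ZMod d)) * (b : ZMod d)⁻¹).val := by
  have hb1 : (b : ZMod d) * (b : ZMod d)⁻¹ = 1 := ZMod.coe_mul_inv_eq_one b hbd
  have key : ((a : ZMod d) + i * b = 0) ↔
      ((i : ZMod d) = (-(a : ZMod d)) * (b : ZMod d)⁻¹) := by
    constructor
    · intro h
      have h' : (i : ZMod d) * b = -(a : ZMod d) := eq_neg_of_add_eq_zero_right h
      calc (i : ZMod d) = (i : ZMod d) * ((b : ZMod d) * (b : ZMod d)⁻¹) := by
            rw [hb1, mul_one]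
        _ = ((i : ZMod d) * b) * (b : ZMod d)⁻¹ := by ring
        _ = (-(a : ZMod d)) * (b : ZMod d)⁻¹ := by rw [h']
    · intro h
      rw [h]
      have hx : (-(a : ZMod d)) * (b : ZMod d)⁻¹ * b = -(a : ZMod d) := by
        rw [mul_assoc, mul_comm ((b : ZMod d)⁻¹), hb1, mul_one]
      rw [hx]; ring
  rw [← ZMod.natCast_eq_zero_iff]
  push_cast
  rw [key, ← ZMod.val_natCast]
  exact ⟨fun h => by rw [h], fun h => ZMod.val_injective d h⟩

private lemma aux_count_prog (m a b d : ℕ) (hd : 0 < d) (hbd : Nat.gcd b d = 1) :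
    ((Finset.range m).filter (fun i => d ∣ a + i * b)).card
      = m / d + if ((-(a : ZMod d)) * (b : ZMod d)⁻¹).val < m % d then 1 else 0 := by
  haveI : NeZero d := ⟨hd.ne'⟩
  have heq : (Finset.range m).filter (fun i => d ∣ a + i * b)
      = (Finset.range m).filter
          (fun i => i % d = ((-(a : ZMod d)) * (b : ZMod d)⁻¹).val) := by
    apply Finset.filter_congr
    intro i _
    simpa using aux_dvd_prog_iff d a b i hbd
  rw [heq]
  exact aux_count_mod d hd _ (ZMod.val_lt _) m

private lemma aux_count_prog_zero (m a b d : ℕ) (hab : Nat.gcd a b = 1)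
    (hbd : Nat.gcd b d ≠ 1) :
    (Finset.range m).filter (fun i => d ∣ a + i * b) = ∅ := by
  rw [Finset.filter_eq_empty_iff]
  intro i _ hdvd
  have h1 : Nat.gcd b d ∣ i * b := Dvd.dvd.mul_left (Nat.gcd_dvd_left b d) i
  have h2 : Nat.gcd b d ∣ a + i * b := (Nat.gcd_dvd_right b d).trans hdvd
  have h3 : Nat.gcd b d ∣ a := by
    have := Nat.dvd_sub h2 h1
    rwa [Nat.add_sub_cancel] at this
  have h4 : Nat.gcd b d ∣ Nat.gcd a b := Nat.dvd_gcd h3 (Nat.gcd_dvd_left b d)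
  rw [hab] at h4
  exact hbd (Nat.dvd_one.mp h4)

private lemma aux_nonempty_powerset_card {α : Type*} [DecidableEq α] (T : Finset α) :
    ((T.powerset.filter (fun A => A.Nonempty)).card : ℤ) = 2 ^ T.card - 1 := by
  have h1 : T.powerset.filter (fun A => A.Nonempty) = T.powerset.erase ∅ := by
    ext A
    simp [Finset.nonempty_iff_ne_empty, and_comm]
  rw [h1, Finset.card_erase_of_mem (Finset.empty_mem_powerset T), Finset.card_powerset]
  have h2 : (1 : ℕ) ≤ 2 ^ T.card := Nat.one_le_two_pow
  push_cast [h2]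
  ring

/-- Theorem (Ayad–Kihel): For positive integers `m, n, a, b` with `gcd(a,b) = 1`,
the number `Φ^{(a,b)}(m,n)` of nonempty subsets of `{a, a+b, …, a+(m−1)b}`
relatively prime to `n` equals
`Σ_{d ∣ n, gcd(b,d)=1} μ(d)·(2^{⌊m/d⌋+ε_d} − 1)`. -/
theorem card_relPrimeTo_subsets_arith_prog
    (m n a b : ℕ) (hm : 0 < m) (hn : 0 < n) (ha : 0 < a) (hb : 0 < b)
    (hab : Nat.gcd a b = 1) :
    (((((Finset.range m).image (fun i => a + i * b)).powerset).filter
        (fun A => A.Nonempty ∧ Nat.gcd (A.gcd id) n = 1)).card : ℤ) =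
    ∑ d ∈ n.divisors.filter (fun d => Nat.gcd b d = 1),
      ArithmeticFunction.moebius d *
        (2 ^ (m / d +
          (if ¬ (d ∣ m) ∧ ((-(a : ZMod d)) * (b : ZMod d)⁻¹).val < m - m / d * d
            then 1 else 0)) - 1) := by
  classical
  set S : Finset ℕ := (Finset.range m).image (fun i => a + i * b) with hS
  set P : Finset (Finset ℕ) := S.powerset.filter (fun A => A.Nonempty) with hP
  have hinj : Function.Injective (fun i => a + i * b) := by
    intro i j h
    simp only at h
    have := Nat.add_left_cancel h
    exact Nat.eq_of_mul_eq_mul_right hb this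
  -- Step 1: card as a sum of indicators over nonempty subsets
  have step1 : ((S.powerset.filter
        (fun A => A.Nonempty ∧ Nat.gcd (A.gcd id) n = 1)).card : ℤ)
      = ∑ A ∈ P, (if Nat.gcd (A.gcd id) n = 1 then (1 : ℤ) else 0) := by
    rw [hP, Finset.sum_filter, ← Finset.sum_boole]
    apply congrArg
    funext A
    by_cases h1 : A.Nonempty <;> by_cases h2 : Nat.gcd (A.gcd id) n = 1 <;>
      simp [h1, h2]
  -- Step 2: indicator as a moebius sum over divisors of n
  have step2 : ∀ A ∈ P, (if Nat.gcd (A.gcd id) n = 1 then (1 : ℤ) else 0)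
      = ∑ d ∈ n.divisors,
          if d ∣ A.gcd id then (ArithmeticFunction.moebius d : ℤ) else 0 := by
    intro A _
    have hgcd0 : Nat.gcd (A.gcd id) n ≠ 0 := fun h =>
      hn.ne' (Nat.eq_zero_of_gcd_eq_zero_right h)
    have h1 : (if Nat.gcd (A.gcd id) n = 1 then (1 : ℤ) else 0)
        = ∑ d ∈ (Nat.gcd (A.gcd id) n).divisors,
            (ArithmeticFunction.moebius d : ℤ) := by
      have h := congrArg (fun f : ArithmeticFunction ℤ => f (Nat.gcd (A.gcd id) n))
        ArithmeticFunction.moebius_mul_coe_zeta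
      simp only [ArithmeticFunction.coe_mul_zeta_apply,
        ArithmeticFunction.one_apply] at h
      exact h.symm
    rw [h1]
    have h2 : (Nat.gcd (A.gcd id) n).divisors
        = n.divisors.filter (fun d => d ∣ A.gcd id) := by
      ext d
      simp only [Nat.mem_divisors, Finset.mem_filter]
      constructor
      · rintro ⟨hd, _⟩
        exact ⟨⟨hd.trans (Nat.gcd_dvd_right _ _), hn.ne'⟩,
          hd.trans (Nat.gcd_dvd_left _ _)⟩
      · rintro ⟨⟨hdn, _⟩, hdg⟩
        exact ⟨Nat.dvd_gcd hdg hdn, hgcd0⟩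
    rw [h2, Finset.sum_filter]
  -- Step 3: swap and evaluate inner sums
  have step3 : ∀ d ∈ n.divisors,
      (∑ A ∈ P, if d ∣ A.gcd id then (ArithmeticFunction.moebius d : ℤ) else 0)
      = (ArithmeticFunction.moebius d : ℤ) *
          (2 ^ (((Finset.range m).filter (fun i => d ∣ a + i * b)).card) - 1) := by
    intro d _
    rw [← Finset.sum_filter]
    have hPT : P.filter (fun A => d ∣ A.gcd id)
        = (S.filter (fun x => d ∣ x)).powerset.filter (fun A => A.Nonempty) := by
      ext A
      simp only [hP, Finset.mem_filter, Finset.mem_powerset, aux_subset_filter,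
        Finset.dvd_gcd_iff, id_eq]
      tauto
    rw [hPT, Finset.sum_const, nsmul_eq_mul]
    have hT : S.filter (fun x => d ∣ x)
        = ((Finset.range m).filter (fun i => d ∣ a + i * b)).image
            (fun i => a + i * b) := by
      rw [hS, Finset.filter_image]
    rw [mul_comm]
    congr 1
    rw [aux_nonempty_powerset_card, hT, Finset.card_image_of_injective _ hinj]
  -- Put everything together
  rw [step1, Finset.sum_congr rfl step2, Finset.sum_comm,
    Finset.sum_congr rfl step3, Finset.sum_filter]
  apply Finset.sum_congr rfl
  intro d hdn
  have hd : 0 < d := Nat.pos_of_mem_divisors hdn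
  by_cases hbd : Nat.gcd b d = 1
  · rw [if_pos hbd, aux_count_prog m a b d hd hbd]
    have hsub : m - m / d * d = m % d := Nat.sub_eq_of_eq_add (Nat.mod_add_div' m d).symm
    rw [hsub]
    have hcond : (¬ (d ∣ m) ∧ ((-(a : ZMod d)) * (b : ZMod d)⁻¹).val < m % d)
        ↔ (((-(a : ZMod d)) * (b : ZMod d)⁻¹).val < m % d) := by
      constructor
      · exact And.right
      · intro h
        refine ⟨fun hdm => ?_, h⟩
        obtain ⟨k, rfl⟩ := hdm
        rw [Nat.mul_mod_right] at h
        omega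
    simp only [hcond]
  · rw [if_neg hbd, aux_count_prog_zero m a b d hab hbd]
    simp
end

section
/- Let X be a nonempty finite set of positive integers and let n, k be positive integers. For each positive integer d let X_d = {x ∈ X : d ∣ x}. Then the number of subsets A of X with |A| = k and gcd(A ∪ {n}) = 1 equals Σ_{d ∣ n} μ(d)·C(|X_d|, k), where C(n, k) is the binomial coefficient. -/
/-- Equation (5): For a nonempty finite set `X` of positive integers and
positive integers `n, k`, the number `Φ_k(X, n)` of subsets `A ⊆ X` with
`|A| = k` relatively prime to `n` equals `Σ_{d ∣ n} μ(d)·C(|X_d|, k)`. -/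
theorem card_relPrimeTo_subsets_card_eq
    (X : Finset ℕ) (hX : X.Nonempty) (hpos : ∀ x ∈ X, 0 < x)
    (n k : ℕ) (hn : 0 < n) (hk : 0 < k) :
    ((X.powerset.filter (fun A => A.card = k ∧ Nat.gcd (A.gcd id) n = 1)).card : ℤ) =
    ∑ d ∈ n.divisors,
      ArithmeticFunction.moebius d * ((X.filter (fun x => d ∣ x)).card.choose k : ℤ) := by
  classical
  have hmu : ∀ m : ℕ, ∑ d ∈ m.divisors, (ArithmeticFunction.moebius d : ℤ)
      = if m = 1 then 1 else 0 := by
    intro m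
    have h := ArithmeticFunction.coe_mul_zeta_apply (R := ℤ)
      (f := (ArithmeticFunction.moebius : ArithmeticFunction ℤ)) (x := m)
    rw [ArithmeticFunction.moebius_mul_coe_zeta] at h
    rw [← h, ArithmeticFunction.one_apply]
  have h1 : (X.powerset.filter (fun A => A.card = k ∧ Nat.gcd (A.gcd id) n = 1))
      = (X.powersetCard k).filter (fun A => Nat.gcd (A.gcd id) n = 1) := by
    ext A
    simp only [Finset.mem_filter, Finset.mem_powerset, Finset.mem_powersetCard]
    tauto
  rw [h1, Finset.card_filter]
  push_cast
  have hind : ∀ A ∈ X.powersetCard k,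
      (if Nat.gcd (A.gcd id) n = 1 then (1:ℤ) else 0)
      = ∑ d ∈ n.divisors,
          if d ∣ A.gcd id then (ArithmeticFunction.moebius d : ℤ) else 0 := by
    intro A _
    rw [← Finset.sum_filter]
    have hfil : n.divisors.filter (fun d => d ∣ A.gcd id)
        = (Nat.gcd (A.gcd id) n).divisors := by
      ext d
      simp only [Finset.mem_filter, Nat.mem_divisors, Nat.dvd_gcd_iff]
      constructor
      · rintro ⟨⟨h1, h2⟩, h3⟩
        exact ⟨⟨h3, h1⟩, (Nat.gcd_pos_of_pos_right _ hn).ne'⟩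
      · rintro ⟨⟨h1, h2⟩, _⟩
        exact ⟨⟨h2, hn.ne'⟩, h1⟩
    rw [hfil, hmu]
  rw [Finset.sum_congr rfl hind, Finset.sum_comm]
  refine Finset.sum_congr rfl fun d hd => ?_
  rw [← Finset.sum_filter]
  have hfil2 : (X.powersetCard k).filter (fun A => d ∣ A.gcd id)
      = (X.filter (fun x => d ∣ x)).powersetCard k := by
    ext A
    simp only [Finset.mem_filter, Finset.mem_powersetCard, Finset.dvd_gcd_iff,
      Finset.subset_iff, id]
    constructor
    · rintro ⟨⟨h1, h2⟩, h3⟩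
      exact ⟨fun x hx => ⟨h1 hx, h3 x hx⟩, h2⟩
    · rintro ⟨h1, h2⟩
      exact ⟨⟨fun x hx => (h1 hx).1, h2⟩, fun x hx => (h1 hx).2⟩
  rw [hfil2, Finset.sum_const, Finset.card_powersetCard, nsmul_eq_mul, mul_comm]
end

section
/- Let ℓ ≥ 1 and let a_1 ≤ b_1 < a_2 ≤ b_2 < ... < a_ℓ ≤ b_ℓ be positive integers, so that the integer intervals [a_i, b_i] = {a_i, a_i+1, ..., b_i} are pairwise disjoint, and set X = [a_1,b_1] ∪ [a_2,b_2] ∪ ... ∪ [a_ℓ,b_ℓ]. Then for all positive integers n and k, the number of subsets A of X with |A| = k and gcd(A ∪ {n}) = 1 equals Σ_{d ∣ n} μ(d)·C(Σ_{i=1}^{ℓ} (⌊b_i/d⌋ − ⌊(a_i−1)/d⌋), k), where C(n, k) is the binomial coefficient. -/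
open Finset

private lemma Icc_filter_dvd_card (d m N : ℕ) (hm : 0 < m) (h : m ≤ N) :
    ((Finset.Icc m N).filter (d ∣ ·)).card = N / d - (m - 1) / d := by
  have hIcc : Finset.Icc m N = Finset.Ioc (m - 1) N := by
    ext x; simp only [Finset.mem_Icc, Finset.mem_Ioc]; omega
  have hunion : Finset.Ioc 0 (m - 1) ∪ Finset.Ioc (m - 1) N = Finset.Ioc 0 N :=
    Finset.Ioc_union_Ioc_eq_Ioc (Nat.zero_le _) (by omega)
  have hdisj : Disjoint (Finset.Ioc 0 (m - 1)) (Finset.Ioc (m - 1) N) := by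
    rw [Finset.disjoint_left]; intro x hx hx'
    simp only [Finset.mem_Ioc] at hx hx'; omega
  have hc : ((Finset.Ioc 0 (m - 1)).filter (d ∣ ·)).card
      + ((Finset.Ioc (m - 1) N).filter (d ∣ ·)).card
      = ((Finset.Ioc 0 N).filter (d ∣ ·)).card := by
    rw [← Finset.card_union_of_disjoint (Finset.disjoint_filter_filter hdisj),
      ← Finset.filter_union, hunion]
  rw [Nat.Ioc_filter_dvd_card_eq_div, Nat.Ioc_filter_dvd_card_eq_div] at hc
  rw [hIcc]
  omega

/-- Theorem 3(i): Let `X = [a_1,b_1] ∪ … ∪ [a_ℓ,b_ℓ]` be a union of pairwise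
disjoint integer intervals of positive integers (with
`a_1 ≤ b_1 < a_2 ≤ b_2 < … < a_ℓ ≤ b_ℓ`).  Then for all positive integers
`n, k`, `Φ_k(X, n) = Σ_{d ∣ n} μ(d)·C(Σ_{i=1}^ℓ (⌊b_i/d⌋ − ⌊(a_i−1)/d⌋), k)`. -/
theorem card_relPrimeTo_subsets_card_eq_union_intervals
    (ℓ : ℕ) (hℓ : 1 ≤ ℓ) (a b : ℕ → ℕ)
    (ha : ∀ i < ℓ, 0 < a i) (hab : ∀ i < ℓ, a i ≤ b i)
    (hord : ∀ i, i + 1 < ℓ → b i < a (i + 1))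
    (n k : ℕ) (hn : 0 < n) (hk : 0 < k) :
    ((((Finset.range ℓ).biUnion (fun i => Finset.Icc (a i) (b i))).powerset.filter
        (fun A => A.card = k ∧ Nat.gcd (A.gcd id) n = 1)).card : ℤ) =
    ∑ d ∈ n.divisors,
      ArithmeticFunction.moebius d *
        ((∑ i ∈ Finset.range ℓ, (b i / d - (a i - 1) / d)).choose k : ℤ) := by
  set X := (Finset.range ℓ).biUnion (fun i => Finset.Icc (a i) (b i)) with hX
  -- chain ordering
  have hchain : ∀ i j, i < j → j < ℓ → b i < a j := by
    intro i j
    induction j with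
    | zero => omega
    | succ m ih =>
      intro hij hj
      rcases Nat.lt_succ_iff_lt_or_eq.mp hij with h | h
      · have h1 := ih h (by omega)
        have h2 := hab m (by omega)
        have h3 := hord m hj
        omega
      · subst h; exact hord i hj
  -- counting multiples of d in X
  have hcard : ∀ d : ℕ, (X.filter (d ∣ ·)).card
      = ∑ i ∈ Finset.range ℓ, (b i / d - (a i - 1) / d) := by
    intro d
    rw [hX, Finset.filter_biUnion, Finset.card_biUnion]
    · exact Finset.sum_congr rfl (fun i hi =>
        Icc_filter_dvd_card d _ _ (ha i (Finset.mem_range.mp hi))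
          (hab i (Finset.mem_range.mp hi)))
    · intro i hi j hj hij
      apply Finset.disjoint_filter_filter
      rw [Finset.disjoint_left]
      intro x hx hx'
      simp only [Finset.mem_Icc] at hx hx'
      rcases Nat.lt_or_ge i j with h | h
      · have := hchain i j h (Finset.mem_range.mp hj); omega
      · have := hchain j i (by omega) (Finset.mem_range.mp hi); omega
  -- Moebius indicator
  have hmu : ∀ g : ℕ, ∑ e ∈ g.divisors, (ArithmeticFunction.moebius e : ℤ)
      = if g = 1 then 1 else 0 := by
    intro g
    have h := congrArg (fun f : ArithmeticFunction ℤ => f g)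
      ArithmeticFunction.moebius_mul_coe_zeta
    rw [ArithmeticFunction.coe_mul_zeta_apply, ArithmeticFunction.one_apply] at h
    exact h
  have hdiv : ∀ A : Finset ℕ, (Nat.gcd (A.gcd id) n).divisors
      = n.divisors.filter (· ∣ A.gcd id) := by
    intro A
    ext e
    simp only [Nat.mem_divisors, Finset.mem_filter, Nat.dvd_gcd_iff]
    constructor
    · rintro ⟨⟨h1, h2⟩, h3⟩; exact ⟨⟨h2, hn.ne'⟩, h1⟩
    · rintro ⟨⟨h1, h2⟩, h3⟩
      exact ⟨⟨h3, h1⟩, fun hz => hn.ne' (Nat.eq_zero_of_gcd_eq_zero_right hz)⟩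
  have hstep1 : X.powerset.filter (fun A => A.card = k ∧ Nat.gcd (A.gcd id) n = 1)
      = (X.powersetCard k).filter (fun A => Nat.gcd (A.gcd id) n = 1) := by
    ext A
    simp only [Finset.mem_filter, Finset.mem_powerset, Finset.mem_powersetCard]
    tauto
  rw [hstep1, Finset.card_filter]
  push_cast
  calc (∑ A ∈ X.powersetCard k, if Nat.gcd (A.gcd id) n = 1 then (1:ℤ) else 0)
      = ∑ A ∈ X.powersetCard k, ∑ d ∈ n.divisors,
          (if d ∣ A.gcd id then (ArithmeticFunction.moebius d : ℤ) else 0) := by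
        refine Finset.sum_congr rfl fun A _ => ?_
        rw [← Finset.sum_filter, ← hdiv, hmu]
    _ = ∑ d ∈ n.divisors, ∑ A ∈ X.powersetCard k,
          (if d ∣ A.gcd id then (ArithmeticFunction.moebius d : ℤ) else 0) :=
        Finset.sum_comm
    _ = ∑ d ∈ n.divisors, (ArithmeticFunction.moebius d : ℤ) *
          ((∑ i ∈ Finset.range ℓ, (b i / d - (a i - 1) / d)).choose k : ℤ) := by
        refine Finset.sum_congr rfl fun d _ => ?_
        rw [← Finset.sum_filter, Finset.sum_const]
        have hset : (X.powersetCard k).filter (fun A => d ∣ A.gcd id)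
            = (X.filter (d ∣ ·)).powersetCard k := by
          ext A
          simp only [Finset.mem_filter, Finset.mem_powersetCard, Finset.subset_iff,
            Finset.dvd_gcd_iff, id_eq]
          constructor
          · rintro ⟨⟨hsub, hcardA⟩, hdvd⟩
            exact ⟨fun x hx => ⟨hsub hx, hdvd x hx⟩, hcardA⟩
          · rintro ⟨hsub, hcardA⟩
            exact ⟨⟨fun x hx => (hsub hx).1, hcardA⟩, fun x hx => (hsub hx).2⟩
        rw [hset, Finset.card_powersetCard, hcard d]
        push_cast
        ring
end

section
/- Let ℓ ≥ 1 and let a_1 ≤ b_1 < a_2 ≤ b_2 < ... < a_ℓ ≤ b_ℓ be positive integers, so that the integer intervals [a_i, b_i] = {a_i, a_i+1, ..., b_i} are pairwise disjoint, and set X = [a_1,b_1] ∪ [a_2,b_2] ∪ ... ∪ [a_ℓ,b_ℓ]. Then for every positive integer n, the number of nonempty subsets A of X with gcd(A ∪ {n}) = 1 equals Σ_{d ∣ n} μ(d)·(2^{Σ_{i=1}^{ℓ} (⌊b_i/d⌋ − ⌊(a_i−1)/d⌋)} − 1). -/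
/-!
Expanding `[gcd(A, n) = 1] = ∑_{d ∣ gcd(A, n)} μ(d)` and swapping the sums, `Φ(X, n)` becomes
`∑_{d ∣ n} μ(d) (2^{m_d} - 1)`, where `2^{m_d} - 1` counts the nonempty subsets of the `m_d`
multiples of `d` in `X`. For pairwise disjoint intervals, `m_d` is the sum over the intervals of
`#([a, b] ∩ dℕ) = ⌊b/d⌋ - ⌊(a-1)/d⌋`.
-/

open Finset ArithmeticFunction
open scoped ArithmeticFunction.Moebius

theorem sum_divisors_filter_dvd_moebius (g : ℕ) {n : ℕ} (hn : n ≠ 0) :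
    ∑ d ∈ n.divisors with d ∣ g, μ d = if g.gcd n = 1 then 1 else 0 := by
  have hdiv : {d ∈ n.divisors | d ∣ g} = (g.gcd n).divisors := by
    rw [← Nat.divisors_filter_dvd_of_dvd hn (Nat.gcd_dvd_right g n)]
    exact filter_congr fun d hd => by
      rw [Nat.dvd_gcd_iff, and_iff_left (Nat.dvd_of_mem_divisors hd)]
  rw [hdiv, ← coe_mul_zeta_apply, moebius_mul_coe_zeta, one_apply]

theorem Finset.card_filter_nonempty_powerset {α : Type*} (s : Finset α) :
    #{A ∈ s.powerset | A.Nonempty} = 2 ^ #s - 1 := by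
  classical
  have : {A ∈ s.powerset | A.Nonempty} = s.powerset.erase ∅ := by
    ext A
    simp [nonempty_iff_ne_empty, and_comm]
  rw [this, card_erase_of_mem (empty_mem_powerset s), card_powerset]

theorem Finset.filter_powerset_forall_mem {α : Type*} (s : Finset α) (p : α → Prop)
    [DecidablePred p] : {A ∈ s.powerset | ∀ x ∈ A, p x} = {x ∈ s | p x}.powerset := by
  ext A
  simp only [mem_filter, mem_powerset, subset_iff]
  grind

theorem card_nonempty_subsets_gcd_eq_one (X : Finset ℕ) {n : ℕ} (hn : n ≠ 0) :
    (#{A ∈ X.powerset | A.Nonempty ∧ (A.gcd id).gcd n = 1} : ℤ) =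
      ∑ d ∈ n.divisors, μ d * (2 ^ #{x ∈ X | d ∣ x} - 1) := by
  have hmult (d : ℕ) : {A ∈ X.powerset | A.Nonempty ∧ d ∣ A.gcd id} =
      {A ∈ {x ∈ X | d ∣ x}.powerset | A.Nonempty} := by
    rw [← filter_powerset_forall_mem, filter_filter]
    exact filter_congr fun A _ => by rw [Finset.dvd_gcd_iff, and_comm]; rfl
  calc (#{A ∈ X.powerset | A.Nonempty ∧ (A.gcd id).gcd n = 1} : ℤ)
      = ∑ A ∈ X.powerset with A.Nonempty, ∑ d ∈ n.divisors with d ∣ A.gcd id, μ d := by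
        simp only [sum_divisors_filter_dvd_moebius _ hn, sum_boole, filter_filter]
    _ = ∑ d ∈ n.divisors, μ d * #{A ∈ X.powerset | A.Nonempty ∧ d ∣ A.gcd id} := by
        simp only [sum_filter (s := n.divisors)]
        rw [sum_comm]
        refine sum_congr rfl fun d _ => ?_
        rw [← sum_filter, filter_filter, sum_const, nsmul_eq_mul, mul_comm]
    _ = ∑ d ∈ n.divisors, μ d * (2 ^ #{x ∈ X | d ∣ x} - 1) := by
        simp only [hmult, card_filter_nonempty_powerset, Nat.cast_sub Nat.one_le_two_pow,
          Nat.cast_pow, Nat.cast_ofNat, Nat.cast_one]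

theorem Nat.card_filter_dvd_Ioc (a b d : ℕ) : #{x ∈ Ioc a b | d ∣ x} = b / d - a / d := by
  rcases le_total a b with hab | hba
  · rw [← Ioc_filter_dvd_card_eq_div b d, ← Ioc_filter_dvd_card_eq_div a d,
      ← Ioc_union_Ioc_eq_Ioc (zero_le a) hab, filter_union,
      card_union_of_disjoint (disjoint_filter_filter (Ioc_disjoint_Ioc_of_le le_rfl))]
    omega
  · rw [Ioc_eq_empty_of_le hba, filter_empty, card_empty,
      Nat.sub_eq_zero_of_le (Nat.div_le_div_right hba)]

theorem Nat.card_filter_dvd_Icc {a : ℕ} (ha : 0 < a) (b d : ℕ) :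
    #{x ∈ Icc a b | d ∣ x} = b / d - (a - 1) / d := by
  rw [← Nat.card_filter_dvd_Ioc, ← Icc_add_one_left_eq_Ioc, Nat.sub_one_add_one ha.ne']

section IntervalChain

variable {ℓ : ℕ} {a b : ℕ → ℕ} (hab : ∀ i < ℓ, a i ≤ b i)
  (hord : ∀ i, i + 1 < ℓ → b i < a (i + 1))
include hab hord

theorem lt_of_intervalChain {i j : ℕ} (hij : i < j) (hj : j < ℓ) : b i < a j := by
  induction j, hij using Nat.le_induction with
  | base => exact hord i hj
  | succ k hik ih => exact (ih (by omega)).trans_le ((hab k (by omega)).trans (hord k hj).le)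

theorem pairwiseDisjoint_Icc_of_intervalChain :
    (range ℓ : Set ℕ).PairwiseDisjoint fun i => Icc (a i) (b i) := by
  intro i hi j hj hij
  simp only [coe_range, Set.mem_Iio] at hi hj
  rw [Function.onFun, disjoint_left]
  intro x hxi hxj
  rw [mem_Icc] at hxi hxj
  rcases hij.lt_or_gt with h | h
  · have := lt_of_intervalChain hab hord h hj; omega
  · have := lt_of_intervalChain hab hord h hi; omega

theorem card_filter_dvd_biUnion_Icc (ha : ∀ i < ℓ, 0 < a i) (d : ℕ) :
    #{x ∈ (range ℓ).biUnion (fun i => Icc (a i) (b i)) | d ∣ x} =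
      ∑ i ∈ range ℓ, (b i / d - (a i - 1) / d) := by
  rw [filter_biUnion, card_biUnion
    ((pairwiseDisjoint_Icc_of_intervalChain hab hord).mono fun _ => filter_subset _ _)]
  exact sum_congr rfl fun i hi => Nat.card_filter_dvd_Icc (ha i (mem_range.mp hi)) _ _

end IntervalChain

theorem card_relPrimeTo_subsets_union_intervals_general
    (ℓ : ℕ) (a b : ℕ → ℕ)
    (ha : ∀ i < ℓ, 0 < a i) (hab : ∀ i < ℓ, a i ≤ b i)
    (hord : ∀ i, i + 1 < ℓ → b i < a (i + 1))
    (n : ℕ) (hn : 0 < n) :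
    ((((Finset.range ℓ).biUnion (fun i => Finset.Icc (a i) (b i))).powerset.filter
        (fun A => A.Nonempty ∧ Nat.gcd (A.gcd id) n = 1)).card : ℤ) =
    ∑ d ∈ n.divisors,
      ArithmeticFunction.moebius d *
        (2 ^ (∑ i ∈ Finset.range ℓ, (b i / d - (a i - 1) / d)) - 1) := by
  simp only [card_nonempty_subsets_gcd_eq_one _ hn.ne', card_filter_dvd_biUnion_Icc hab hord ha]

/-- Theorem 3(ii): Let `X = [a_1,b_1] ∪ … ∪ [a_ℓ,b_ℓ]` be a union of pairwise
disjoint integer intervals of positive integers (with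
`a_1 ≤ b_1 < a_2 ≤ b_2 < … < a_ℓ ≤ b_ℓ`).  Then for every positive integer
`n`, `Φ(X, n) = Σ_{d ∣ n} μ(d)·(2^{Σ_{i=1}^ℓ (⌊b_i/d⌋ − ⌊(a_i−1)/d⌋)} − 1)`. -/
theorem card_relPrimeTo_subsets_union_intervals
    (ℓ : ℕ) (hℓ : 1 ≤ ℓ) (a b : ℕ → ℕ)
    (ha : ∀ i < ℓ, 0 < a i) (hab : ∀ i < ℓ, a i ≤ b i)
    (hord : ∀ i, i + 1 < ℓ → b i < a (i + 1))
    (n : ℕ) (hn : 0 < n) :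
    ((((Finset.range ℓ).biUnion (fun i => Finset.Icc (a i) (b i))).powerset.filter
        (fun A => A.Nonempty ∧ Nat.gcd (A.gcd id) n = 1)).card : ℤ) =
    ∑ d ∈ n.divisors,
      ArithmeticFunction.moebius d *
        (2 ^ (∑ i ∈ Finset.range ℓ, (b i / d - (a i - 1) / d)) - 1) :=
  card_relPrimeTo_subsets_union_intervals_general ℓ a b ha hab hord n hn
end

section
/- Let ℓ ≥ 1 and let a_1 ≤ b_1 < a_2 ≤ b_2 < ... < a_ℓ ≤ b_ℓ be positive integers, so that the integer intervals [a_i, b_i] = {a_i, a_i+1, ..., b_i} are pairwise disjoint, and set X = [a_1,b_1] ∪ [a_2,b_2] ∪ ... ∪ [a_ℓ,b_ℓ]. Then for every positive integer k, the number of subsets A of X with |A| = k and gcd(A) = 1 equals Σ_{d=1}^{b_ℓ} μ(d)·C(Σ_{i=1}^{ℓ} (⌊b_i/d⌋ − ⌊(a_i−1)/d⌋), k), where C(n, k) is the binomial coefficient. -/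
open Finset


/-- Theorem 3(iii): Let `X = [a_1,b_1] ∪ … ∪ [a_ℓ,b_ℓ]` be a union of pairwise
disjoint integer intervals of positive integers (with
`a_1 ≤ b_1 < a_2 ≤ b_2 < … < a_ℓ ≤ b_ℓ`).  Then for every positive integer
`k`, `f_k(X) = Σ_{d=1}^{b_ℓ} μ(d)·C(Σ_{i=1}^ℓ (⌊b_i/d⌋ − ⌊(a_i−1)/d⌋), k)`. -/
theorem card_relPrime_subsets_card_eq_union_intervals
    (ℓ : ℕ) (hℓ : 1 ≤ ℓ) (a b : ℕ → ℕ)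
    (ha : ∀ i < ℓ, 0 < a i) (hab : ∀ i < ℓ, a i ≤ b i)
    (hord : ∀ i, i + 1 < ℓ → b i < a (i + 1))
    (k : ℕ) (hk : 0 < k) :
    ((((Finset.range ℓ).biUnion (fun i => Finset.Icc (a i) (b i))).powerset.filter
        (fun A => A.card = k ∧ A.gcd id = 1)).card : ℤ) =
    ∑ d ∈ Finset.Icc 1 (b (ℓ - 1)),
      ArithmeticFunction.moebius d *
        ((∑ i ∈ Finset.range ℓ, (b i / d - (a i - 1) / d)).choose k : ℤ) := by
  set X := (Finset.range ℓ).biUnion (fun i => Finset.Icc (a i) (b i)) with hX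
  set N := b (ℓ - 1) with hN
  -- strict ordering of intervals
  have hlt : ∀ i j, i < j → j < ℓ → b i < a j := by
    intro i j hij hj
    induction j with
    | zero => omega
    | succ j ih =>
      rcases Nat.lt_succ_iff_lt_or_eq.mp hij with h | h
      · exact lt_of_lt_of_le (ih h (by omega)) (le_trans (hab j (by omega))
          (le_of_lt (hord j hj)))
      · subst h; exact hord i hj
  -- every element of X is in [1, N]
  have hmem : ∀ x ∈ X, 1 ≤ x ∧ x ≤ N := by
    intro x hx
    rw [hX, Finset.mem_biUnion] at hx
    obtain ⟨i, hi, hxi⟩ := hx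
    rw [Finset.mem_Icc] at hxi
    rw [Finset.mem_range] at hi
    constructor
    · exact le_trans (ha i hi) hxi.1
    · refine le_trans hxi.2 ?_
      rcases Nat.lt_or_ge i (ℓ - 1) with h | h
      · exact le_trans (le_of_lt (hlt i (ℓ - 1) h (by omega))) (hab (ℓ - 1) (by omega))
      · have : i = ℓ - 1 := by omega
        rw [this]
  -- the count of multiples of d in X
  have hcard : ∀ d : ℕ, 0 < d →
      #{x ∈ X | d ∣ x} = ∑ i ∈ Finset.range ℓ, (b i / d - (a i - 1) / d) := by
    intro d hd
    rw [hX, Finset.filter_biUnion]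
    rw [Finset.card_biUnion]
    · refine Finset.sum_congr rfl fun i hi => ?_
      rw [Finset.mem_range] at hi
      have ha1 : 1 ≤ a i := ha i hi
      have hIcc : Finset.Icc (a i) (b i) = Finset.Ioc (a i - 1) (b i) := by
        ext x; simp only [Finset.mem_Icc, Finset.mem_Ioc]; omega
      have hsub : {x ∈ Finset.Ioc 0 (a i - 1) | d ∣ x} ⊆ {x ∈ Finset.Ioc 0 (b i) | d ∣ x} := by
        apply Finset.filter_subset_filter
        exact Finset.Ioc_subset_Ioc le_rfl (by have := hab i hi; omega)
      have hsdiff : {x ∈ Finset.Ioc (a i - 1) (b i) | d ∣ x} =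
          {x ∈ Finset.Ioc 0 (b i) | d ∣ x} \ {x ∈ Finset.Ioc 0 (a i - 1) | d ∣ x} := by
        ext x
        by_cases hdx : d ∣ x <;>
          simp only [Finset.mem_filter, Finset.mem_Ioc, Finset.mem_sdiff, hdx, and_true,
            and_false, not_and, not_le, not_false_iff, false_iff, iff_false] <;> omega
      rw [hIcc, hsdiff, Finset.card_sdiff_of_subset hsub,
        Nat.Ioc_filter_dvd_card_eq_div, Nat.Ioc_filter_dvd_card_eq_div]
    · intro i hi j hj hij
      simp only [Finset.mem_coe, Finset.mem_range] at hi hj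
      apply Finset.disjoint_filter_filter
      rw [Finset.disjoint_left]
      intro x hx hx'
      rw [Finset.mem_Icc] at hx hx'
      rcases Nat.lt_or_ge i j with h | h
      · have := hlt i j h hj; omega
      · have hji : j < i := by omega
        have := hlt j i hji hi; omega
  set S := X.powersetCard k with hS
  -- the binomial coefficient counts k-subsets with all elements divisible by d
  have hchoose : ∀ d : ℕ, 0 < d →
      (∑ i ∈ Finset.range ℓ, (b i / d - (a i - 1) / d)).choose k =
      #{A ∈ S | d ∣ A.gcd id} := by
    intro d hd
    rw [← hcard d hd, ← Finset.card_powersetCard]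
    congr 1
    ext A
    simp only [hS, Finset.mem_powersetCard, Finset.mem_filter, Finset.subset_iff,
      Finset.mem_filter, Finset.dvd_gcd_iff, id]
    constructor
    · rintro ⟨h1, h2⟩
      exact ⟨⟨fun _ hx => (h1 hx).1, h2⟩, fun x hx => (h1 hx).2⟩
    · rintro ⟨⟨h1, h2⟩, h3⟩
      exact ⟨fun _ hx => ⟨h1 hx, h3 _ hx⟩, h2⟩
  -- gcd bounds for A ∈ S
  have hgcd : ∀ A ∈ S, 1 ≤ A.gcd id ∧ A.gcd id ≤ N := by
    intro A hA
    rw [hS, Finset.mem_powersetCard] at hA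
    obtain ⟨hAX, hAk⟩ := hA
    have hne : A.Nonempty := Finset.card_pos.mp (by omega)
    obtain ⟨x, hx⟩ := hne
    have hdvd : A.gcd id ∣ x := Finset.gcd_dvd hx
    obtain ⟨hx1, hxN⟩ := hmem x (hAX hx)
    constructor
    · rcases Nat.eq_zero_or_pos (A.gcd id) with h | h
      · rw [h] at hdvd; simp at hdvd; omega
      · exact h
    · exact le_trans (Nat.le_of_dvd (by omega) hdvd) hxN
  have hdivisors : ∀ A ∈ S, {d ∈ Finset.Icc 1 N | d ∣ A.gcd id} = (A.gcd id).divisors := by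
    intro A hA
    obtain ⟨h1, h2⟩ := hgcd A hA
    ext d
    simp only [Finset.mem_filter, Finset.mem_Icc, Nat.mem_divisors]
    constructor
    · rintro ⟨⟨hd1, hdN⟩, hdvd⟩
      exact ⟨hdvd, by omega⟩
    · rintro ⟨hdvd, hne⟩
      refine ⟨⟨?_, ?_⟩, hdvd⟩
      · rcases Nat.eq_zero_or_pos d with h | h
        · rw [h] at hdvd; simp at hdvd; omega
        · exact h
      · exact le_trans (Nat.le_of_dvd (by omega) hdvd) h2
  calc ((X.powerset.filter (fun A => A.card = k ∧ A.gcd id = 1)).card : ℤ)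
      = (#{A ∈ S | A.gcd id = 1} : ℤ) := by
        congr 2
        ext A
        simp only [hS, Finset.mem_filter, Finset.mem_powerset, Finset.mem_powersetCard]
        tauto
    _ = ∑ A ∈ S, if A.gcd id = 1 then (1 : ℤ) else 0 := by
        rw [Finset.card_filter, Nat.cast_sum]
        refine Finset.sum_congr rfl fun A hA => ?_
        by_cases h : A.gcd id = 1 <;> simp [h]
    _ = ∑ A ∈ S, ∑ d ∈ (A.gcd id).divisors, (ArithmeticFunction.moebius d : ℤ) := by
        refine Finset.sum_congr rfl fun A hA => ?_
        rw [← ArithmeticFunction.coe_mul_zeta_apply, ArithmeticFunction.moebius_mul_coe_zeta,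
          ArithmeticFunction.one_apply]
    _ = ∑ A ∈ S, ∑ d ∈ Finset.Icc 1 N,
          (if d ∣ A.gcd id then (ArithmeticFunction.moebius d : ℤ) else 0) := by
        refine Finset.sum_congr rfl fun A hA => ?_
        rw [← hdivisors A hA, Finset.sum_filter]
    _ = ∑ d ∈ Finset.Icc 1 N, ∑ A ∈ S,
          (if d ∣ A.gcd id then (ArithmeticFunction.moebius d : ℤ) else 0) :=
        Finset.sum_comm
    _ = ∑ d ∈ Finset.Icc 1 N, ArithmeticFunction.moebius d *
          ((∑ i ∈ Finset.range ℓ, (b i / d - (a i - 1) / d)).choose k : ℤ) := by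
        refine Finset.sum_congr rfl fun d hd => ?_
        rw [Finset.mem_Icc] at hd
        rw [hchoose d (by omega), Finset.card_filter, Nat.cast_sum, Finset.mul_sum]
        refine Finset.sum_congr rfl fun A hA => ?_
        by_cases h : d ∣ A.gcd id <;> simp [h]
end

section
/- Let ℓ ≥ 1 and for each i ∈ {1, ..., ℓ} let I_i = {a_i, a_i+b_i, ..., a_i+(m_i−1)b_i} be an m_i-term arithmetic progression of positive integers with gcd(a_i, b_i) = 1, and assume I_i ∩ I_j = ∅ for i ≠ j. Set X = I_1 ∪ ... ∪ I_ℓ and for each positive integer d and each i, let I_{id} = {x ∈ I_i : d ∣ x}. Then for every positive integer k: the number of subsets A of X with |A| = k and gcd(A) = 1 equals Σ_{d=1}^{max X} μ(d)·C(Σ_{i=1}^{ℓ} |I_{id}|, k), and the number of nonempty subsets A of X with gcd(A) = 1 equals Σ_{d=1}^{max X} μ(d)·(2^{Σ_{i=1}^{ℓ} |I_{id}|} − 1); here |I_{id}| = 0 if gcd(d, b_i) ≠ 1, and if gcd(d, b_i) = 1 then |I_{id}| = ⌊m_i/d⌋ + ε_{id}, where ε_{id} = 1 if d ∤ m_i and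 the residue of −a_i·b_i^{−1} modulo d lies in {0, ..., m_i − 1 − ⌊m_i/d⌋·d} (b_i^{−1} being the multiplicative inverse of b_i modulo d), and ε_{id} = 0 otherwise. -/
/-!
Möbius inversion: `[gcd A = 1] = ∑_{d ∣ gcd A} μ(d)`, and every divisor of `gcd A` lies in
`[1, max X]`, so after swapping the sums the coefficient of `μ(d)` counts the admissible subsets
of `X_d = {x ∈ X | d ∣ x}`. As the progressions are disjoint, `|X_d| = ∑ᵢ |I_{id}|`. Since
`gcd(aᵢ, bᵢ) = 1`, a term `aᵢ + t bᵢ` can only be divisible by `d` if `gcd(d, bᵢ) = 1`, and then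
exactly when `t ≡ -aᵢ bᵢ⁻¹ (mod d)`; this residue class has `⌊mᵢ/d⌋ + ε_{id}` members below `mᵢ`.
-/

open Finset ArithmeticFunction

/-- The paper's value of `|I_{id}|` for the progression `a, a + b, …, a + (m - 1) b`. -/
def apDvdCount (d a b m : ℕ) : ℕ :=
  if Nat.gcd d b = 1 then
    m / d + (if ¬ d ∣ m ∧ ((-(a : ZMod d)) * (b : ZMod d)⁻¹).val ≤ m - 1 - m / d * d then 1 else 0)
  else 0

namespace Nat

lemma lt_mod_iff_not_dvd_and_le_sub (x m d : ℕ) :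
    x < m % d ↔ ¬ d ∣ m ∧ x ≤ m - 1 - m / d * d := by
  have := mod_add_div' m d
  rw [dvd_iff_mod_eq_zero]
  omega

lemma Coprime.coprime_of_dvd_add_mul {d a b t : ℕ} (hab : Coprime a b) (h : d ∣ a + t * b) :
    Coprime d b := by
  have hga : gcd d b ∣ a :=
    (Nat.dvd_add_left ((gcd_dvd_right d b).mul_left t)).mp ((gcd_dvd_left d b).trans h)
  exact eq_one_of_dvd_coprimes hab hga (gcd_dvd_right d b)

lemma dvd_add_mul_iff_modEq {d a b t : ℕ} [NeZero d] (h : Coprime d b) :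
    d ∣ a + t * b ↔ t ≡ ((-(a : ZMod d)) * (b : ZMod d)⁻¹).val [MOD d] := by
  have hb : (b : ZMod d) * (b : ZMod d)⁻¹ = 1 :=
    ZMod.mul_inv_of_unit _ ((ZMod.isUnit_iff_coprime b d).mpr h.symm)
  rw [← ZMod.natCast_eq_natCast_iff, ZMod.natCast_zmod_val, ← ZMod.natCast_eq_zero_iff]
  push_cast
  constructor
  · intro hd
    linear_combination (b : ZMod d)⁻¹ * hd - (t : ZMod d) * hb
  · intro ht
    linear_combination (b : ZMod d) * ht - (a : ZMod d) * hb

end Nat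

lemma card_filter_range_dvd_add_mul {d a b : ℕ} [NeZero d] (hab : Nat.Coprime a b) (m : ℕ) :
    #{t ∈ range m | d ∣ a + t * b} = apDvdCount d a b m := by
  by_cases hdb : Nat.Coprime d b
  · rw [apDvdCount, if_pos hdb, filter_congr fun t _ => Nat.dvd_add_mul_iff_modEq hdb,
      ← Nat.count_eq_card_filter_range, Nat.count_modEq_card _ (NeZero.pos d),
      Nat.mod_eq_of_lt (ZMod.val_lt _)]
    simp only [Nat.lt_mod_iff_not_dvd_and_le_sub]
  · rw [apDvdCount, if_neg hdb]
    exact card_eq_zero.mpr <|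
      filter_eq_empty_iff.mpr fun t _ h => hdb (hab.coprime_of_dvd_add_mul h)

lemma card_filter_dvd_image_arithProg {d a b : ℕ} [NeZero d] (hb : 0 < b) (hab : Nat.Coprime a b)
    (m : ℕ) : #{x ∈ (range m).image (fun t => a + t * b) | d ∣ x} = apDvdCount d a b m := by
  have hinj : Function.Injective (fun t => a + t * b) := fun s t hst =>
    Nat.eq_of_mul_eq_mul_right hb (Nat.add_left_cancel hst)
  rw [filter_image, card_image_of_injective _ hinj, card_filter_range_dvd_add_mul hab]

lemma card_filter_dvd_biUnion_arithProg {ι : Type*} {s : Finset ι} {a b m : ι → ℕ}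
    {I : ι → Finset ℕ} (hb : ∀ i ∈ s, 0 < b i) (hab : ∀ i ∈ s, Nat.Coprime (a i) (b i))
    (hI : ∀ i ∈ s, I i = (range (m i)).image (fun t => a i + t * b i))
    (hdisj : (s : Set ι).PairwiseDisjoint I) (d : ℕ) [NeZero d] :
    #{x ∈ s.biUnion I | d ∣ x} = ∑ i ∈ s, apDvdCount d (a i) (b i) (m i) := by
  rw [filter_biUnion, card_biUnion fun i hi j hj hij => disjoint_filter_filter (hdisj hi hj hij)]
  exact sum_congr rfl fun i hi => by
    rw [hI i hi, card_filter_dvd_image_arithProg (hb i hi) (hab i hi)]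

lemma sum_divisors_moebius (n : ℕ) : ∑ d ∈ n.divisors, moebius d = if n = 1 then 1 else 0 := by
  rw [← coe_mul_zeta_apply, moebius_mul_coe_zeta, one_apply]

lemma card_filter_eq_one_eq_sum_moebius {α : Type*} (S : Finset α) (g : α → ℕ) {M : ℕ}
    (hg : ∀ x ∈ S, g x ∈ Icc 1 M) :
    (#{x ∈ S | g x = 1} : ℤ) =
      ∑ d ∈ Icc 1 M, moebius d * #{x ∈ S | d ∣ g x} := by
  have hdiv : ∀ x ∈ S, {d ∈ Icc 1 M | d ∣ g x} = (g x).divisors := fun x hx => by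
    obtain ⟨hgx, hgxM⟩ := mem_Icc.mp (hg x hx)
    ext d
    simp only [mem_filter, mem_Icc, Nat.mem_divisors]
    exact ⟨fun h => ⟨h.2, by omega⟩, fun h =>
      ⟨⟨Nat.pos_of_dvd_of_pos h.1 hgx, (Nat.le_of_dvd hgx h.1).trans hgxM⟩, h.1⟩⟩
  calc (#{x ∈ S | g x = 1} : ℤ)
      = ∑ x ∈ S, ∑ d ∈ (g x).divisors, moebius d := by
        simp only [natCast_card_filter, sum_divisors_moebius]
    _ = ∑ x ∈ S, ∑ d ∈ Icc 1 M, if d ∣ g x then moebius d else 0 :=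
        sum_congr rfl fun x hx => by rw [← sum_filter, hdiv x hx]
    _ = _ := by
        rw [sum_comm]
        simp only [natCast_card_filter, mul_sum, mul_ite, mul_one, mul_zero]

lemma Finset.gcd_id_mem_Icc {A : Finset ℕ} {M : ℕ} (hA : A.Nonempty)
    (hAM : ∀ x ∈ A, x ∈ Icc 1 M) :
    A.gcd id ∈ Icc 1 M := by
  obtain ⟨x, hx⟩ := hA
  have hxM := mem_Icc.mp (hAM x hx)
  have hgx : A.gcd id ∣ x := gcd_dvd hx
  exact mem_Icc.mpr ⟨Nat.pos_of_dvd_of_pos hgx hxM.1, (Nat.le_of_dvd hxM.1 hgx).trans hxM.2⟩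

lemma filter_powerset_dvd_gcd (X : Finset ℕ) (d : ℕ) (P : Finset ℕ → Prop) [DecidablePred P] :
    {A ∈ {A ∈ X.powerset | P A} | d ∣ A.gcd id} = {A ∈ {x ∈ X | d ∣ x}.powerset | P A} := by
  ext A
  simp only [mem_filter, mem_powerset, subset_iff, Finset.dvd_gcd_iff, id]
  grind

lemma card_filter_powerset_gcd_eq_one {X : Finset ℕ} {M : ℕ} (hX : ∀ x ∈ X, x ∈ Icc 1 M)
    (P : Finset ℕ → Prop) [DecidablePred P] (hP : ∀ A, P A → A.Nonempty) :
    (#{A ∈ X.powerset | P A ∧ A.gcd id = 1} : ℤ) =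
      ∑ d ∈ Icc 1 M, moebius d * #{A ∈ {x ∈ X | d ∣ x}.powerset | P A} := by
  have hgcd : ∀ A ∈ {A ∈ X.powerset | P A}, A.gcd id ∈ Icc 1 M := fun A hA => by
    obtain ⟨hAX, hPA⟩ := mem_filter.mp hA
    exact gcd_id_mem_Icc (hP A hPA) fun x hx => hX x (mem_powerset.mp hAX hx)
  rw [← filter_filter, card_filter_eq_one_eq_sum_moebius _ _ hgcd]
  simp only [filter_powerset_dvd_gcd]

lemma card_filter_powerset_nonempty {α : Type*} [DecidableEq α] (X : Finset α) :
    (#{A ∈ X.powerset | A.Nonempty} : ℤ) = 2 ^ #X - 1 := by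
  simp only [nonempty_iff_ne_empty]
  rw [filter_ne', card_erase_of_mem (empty_mem_powerset X), card_powerset,
    Nat.cast_sub Nat.one_le_two_pow, Nat.cast_pow, Nat.cast_ofNat, Nat.cast_one]

theorem card_relPrime_subsets_union_arith_progs_general
    (ℓ : ℕ) (a b m : ℕ → ℕ) (I : ℕ → Finset ℕ)
    (ha : ∀ i < ℓ, 0 < a i) (hb : ∀ i < ℓ, 0 < b i)
    (hcop : ∀ i < ℓ, Nat.gcd (a i) (b i) = 1)
    (hI : ∀ i < ℓ, I i = (Finset.range (m i)).image (fun t => a i + t * b i))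
    (hdisj : ∀ i < ℓ, ∀ j < ℓ, i ≠ j → Disjoint (I i) (I j))
    (hne : ((Finset.range ℓ).biUnion I).Nonempty)
    (k : ℕ) (hk : 0 < k) :
    (((((Finset.range ℓ).biUnion I).powerset.filter
        (fun A => A.card = k ∧ A.gcd id = 1)).card : ℤ) =
      ∑ d ∈ Finset.Icc 1 (((Finset.range ℓ).biUnion I).max' hne),
        ArithmeticFunction.moebius d *
          ((∑ i ∈ Finset.range ℓ,
            (if Nat.gcd d (b i) = 1 then
              m i / d +
                (if ¬ (d ∣ m i) ∧
                    ((-(a i : ZMod d)) * (b i : ZMod d)⁻¹).val ≤ m i - 1 - m i / d * d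
                  then 1 else 0)
              else 0)).choose k : ℤ)) ∧
    (((((Finset.range ℓ).biUnion I).powerset.filter
        (fun A => A.Nonempty ∧ A.gcd id = 1)).card : ℤ) =
      ∑ d ∈ Finset.Icc 1 (((Finset.range ℓ).biUnion I).max' hne),
        ArithmeticFunction.moebius d *
          (2 ^ (∑ i ∈ Finset.range ℓ,
            (if Nat.gcd d (b i) = 1 then
              m i / d +
                (if ¬ (d ∣ m i) ∧
                    ((-(a i : ZMod d)) * (b i : ZMod d)⁻¹).val ≤ m i - 1 - m i / d * d
                  then 1 else 0)
              else 0)) - 1)) := by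
  set X := (range ℓ).biUnion I
  have hX : ∀ x ∈ X, x ∈ Icc 1 (X.max' hne) := fun x hx => by
    obtain ⟨i, hi, hxi⟩ := mem_biUnion.mp hx
    rw [hI i (mem_range.mp hi)] at hxi
    obtain ⟨t, -, rfl⟩ := mem_image.mp hxi
    exact mem_Icc.mpr ⟨(ha i (mem_range.mp hi)).trans_le (Nat.le_add_right _ _), le_max' X _ hx⟩
  have hcard : ∀ d ∈ Icc 1 (X.max' hne),
      #{x ∈ X | d ∣ x} = ∑ i ∈ range ℓ, apDvdCount d (a i) (b i) (m i) := fun d hd => by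
    have : NeZero d := NeZero.of_pos (mem_Icc.mp hd).1
    exact card_filter_dvd_biUnion_arithProg (fun i hi => hb i (mem_range.mp hi))
      (fun i hi => hcop i (mem_range.mp hi)) (fun i hi => hI i (mem_range.mp hi))
      (fun i hi j hj hij => hdisj i (mem_range.mp hi) j (mem_range.mp hj) hij) d
  constructor
  · rw [card_filter_powerset_gcd_eq_one hX (#· = k) fun A hA => card_pos.mp (hA ▸ hk)]
    refine sum_congr rfl fun d hd => ?_
    rw [← powersetCard_eq_filter, card_powersetCard, hcard d hd]
    rfl
  · rw [card_filter_powerset_gcd_eq_one hX Finset.Nonempty fun A hA => hA]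
    refine sum_congr rfl fun d hd => ?_
    rw [card_filter_powerset_nonempty, hcard d hd]
    rfl

/-- Theorem 4 (parts (iii), (iv)): Let `X = I_1 ∪ … ∪ I_ℓ` where
`I_i = {a_i, a_i+b_i, …, a_i+(m_i−1)b_i}` are pairwise disjoint arithmetic
progressions of positive integers with `gcd(a_i, b_i) = 1`.  Then for every
positive integer `k`,
`f_k(X) = Σ_{d=1}^{max X} μ(d)·C(Σ_{i=1}^ℓ |I_{id}|, k)` and
`f(X) = Σ_{d=1}^{max X} μ(d)·(2^{Σ_{i=1}^ℓ |I_{id}|} − 1)`, where `|I_{id}| = 0`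
if `gcd(d, b_i) ≠ 1` and `|I_{id}| = ⌊m_i/d⌋ + ε_{id}` otherwise. -/
theorem card_relPrime_subsets_union_arith_progs
    (ℓ : ℕ) (hℓ : 1 ≤ ℓ) (a b m : ℕ → ℕ) (I : ℕ → Finset ℕ)
    (ha : ∀ i < ℓ, 0 < a i) (hb : ∀ i < ℓ, 0 < b i) (hm : ∀ i < ℓ, 0 < m i)
    (hcop : ∀ i < ℓ, Nat.gcd (a i) (b i) = 1)
    (hI : ∀ i < ℓ, I i = (Finset.range (m i)).image (fun t => a i + t * b i))
    (hdisj : ∀ i < ℓ, ∀ j < ℓ, i ≠ j → Disjoint (I i) (I j))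
    (hne : ((Finset.range ℓ).biUnion I).Nonempty)
    (k : ℕ) (hk : 0 < k) :
    (((((Finset.range ℓ).biUnion I).powerset.filter
        (fun A => A.card = k ∧ A.gcd id = 1)).card : ℤ) =
      ∑ d ∈ Finset.Icc 1 (((Finset.range ℓ).biUnion I).max' hne),
        ArithmeticFunction.moebius d *
          ((∑ i ∈ Finset.range ℓ,
            (if Nat.gcd d (b i) = 1 then
              m i / d +
                (if ¬ (d ∣ m i) ∧
                    ((-(a i : ZMod d)) * (b i : ZMod d)⁻¹).val ≤ m i - 1 - m i / d * d
                  then 1 else 0)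
              else 0)).choose k : ℤ)) ∧
    (((((Finset.range ℓ).biUnion I).powerset.filter
        (fun A => A.Nonempty ∧ A.gcd id = 1)).card : ℤ) =
      ∑ d ∈ Finset.Icc 1 (((Finset.range ℓ).biUnion I).max' hne),
        ArithmeticFunction.moebius d *
          (2 ^ (∑ i ∈ Finset.range ℓ,
            (if Nat.gcd d (b i) = 1 then
              m i / d +
                (if ¬ (d ∣ m i) ∧
                    ((-(a i : ZMod d)) * (b i : ZMod d)⁻¹).val ≤ m i - 1 - m i / d * d
                  then 1 else 0)
              else 0)) - 1)) :=
  card_relPrime_subsets_union_arith_progs_general ℓ a b m I ha hb hcop hI hdisj hne k hk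
end

section
/- For all positive integers n, k, m with n ≥ k, the number of nondecreasing k-tuples (a_1, a_2, ..., a_k) of integers with 1 ≤ a_1 ≤ a_2 ≤ ... ≤ a_k ≤ n and gcd(a_1, a_2, ..., a_k, m) = 1 equals Σ_{d ∣ m} μ(d)·C(⌊n/d⌋ + k − 1, k), where C(n, k) is the binomial coefficient; moreover, the number of such nondecreasing k-tuples with gcd(a_1, ..., a_k) = 1 equals Σ_{d=1}^{n} μ(d)·C(⌊n/d⌋ + k − 1, k). -/
-- gap lemma for strict mono Fin k → ℕ
lemma strictMono_gap {k : ℕ} {e : Fin k → ℕ} (he : StrictMono e) :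
    ∀ i j : Fin k, i ≤ j → e i + (j.val - i.val) ≤ e j := by
  intro i j hij
  obtain ⟨d, hd⟩ : ∃ d, j.val = i.val + d := ⟨j.val - i.val, by omega⟩
  have : j.val - i.val = d := by omega
  rw [this]
  clear this hij
  induction d generalizing j with
  | zero => have : i = j := Fin.ext (by omega); subst this; omega
  | succ d ih =>
    have hlt : i.val + d < k := by omega
    have h1 := ih ⟨i.val + d, hlt⟩ rfl
    have h2 : e ⟨i.val + d, hlt⟩ < e j := he (by simp [Fin.lt_def, hd])
    omega

lemma count_monotone (N k : ℕ) (hk : 0 < k) :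
    ((Fintype.piFinset (fun _ : Fin k => Finset.Icc 1 N)).filter
      (fun f => ∀ i j : Fin k, i ≤ j → f i ≤ f j)).card = (N + k - 1).choose k := by
  have hcard : (Finset.Icc 1 (N + k - 1)).card = N + k - 1 := by
    rw [Nat.card_Icc]; omega
  rw [← hcard, ← Finset.card_powersetCard]
  refine Finset.card_bij' (fun f _ => Finset.image (fun i : Fin k => f i + i.val) Finset.univ)
    (fun s hs => fun i : Fin k =>
      s.orderEmbOfFin (by rw [(Finset.mem_powersetCard.1 hs).2]) i - i.val) ?_ ?_ ?_ ?_
  · -- forward maps into powersetCard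
    intro f hf
    rw [Finset.mem_filter, Fintype.mem_piFinset] at hf
    obtain ⟨hmem, hmono⟩ := hf
    have hsm : StrictMono (fun i : Fin k => f i + i.val) := by
      intro i j hij
      show f i + i.val < f j + j.val
      have := hmono i j (le_of_lt hij)
      simp only [Fin.lt_def] at hij
      omega
    rw [Finset.mem_powersetCard]
    constructor
    · intro x hx
      rcases Finset.mem_image.1 hx with ⟨i, _, rfl⟩
      have h1 := hmem i
      rw [Finset.mem_Icc] at h1 ⊢
      have : i.val < k := i.isLt
      omega
    · rw [Finset.card_image_of_injective _ hsm.injective, Finset.card_univ, Fintype.card_fin]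
  · -- backward maps into filter
    intro s hs
    rw [Finset.mem_powersetCard] at hs
    obtain ⟨hsub, hc⟩ := hs
    have hmem : ∀ i : Fin k, 1 ≤ s.orderEmbOfFin hc i ∧ s.orderEmbOfFin hc i ≤ N + k - 1 :=
      fun i => Finset.mem_Icc.1 (hsub (s.orderEmbOfFin_mem hc i))
    have hgap := strictMono_gap (s.orderEmbOfFin hc).strictMono
    refine Finset.mem_filter.2 ⟨Fintype.mem_piFinset.2 ?_, ?_⟩
    · intro i
      have hklt : k - 1 < k := by omega
      have h0 : (⟨0, hk⟩ : Fin k) ≤ i := Fin.mk_le_of_le_val (Nat.zero_le _)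
      have hlast : i ≤ (⟨k - 1, hklt⟩ : Fin k) := by
        rw [Fin.le_def]; simp; omega
      have hlow : s.orderEmbOfFin hc ⟨0, hk⟩ + (i.val - 0) ≤ s.orderEmbOfFin hc i :=
        hgap ⟨0, hk⟩ i h0
      have hhigh : s.orderEmbOfFin hc i + (k - 1 - i.val) ≤ s.orderEmbOfFin hc ⟨k - 1, hklt⟩ :=
        hgap i ⟨k - 1, hklt⟩ hlast
      have h1 := hmem ⟨0, hk⟩
      have h2 := hmem ⟨k - 1, hklt⟩
      refine Finset.mem_Icc.2 ?_
      show 1 ≤ s.orderEmbOfFin hc i - i.val ∧ s.orderEmbOfFin hc i - i.val ≤ N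
      have hik : i.val < k := i.isLt
      have ha : ((⟨0, hk⟩ : Fin k) : ℕ) = 0 := rfl
      have hb : ((⟨k - 1, hklt⟩ : Fin k) : ℕ) = k - 1 := rfl
      constructor <;> omega
    · intro i j hij
      show s.orderEmbOfFin hc i - i.val ≤ s.orderEmbOfFin hc j - j.val
      have h1 := hgap i j hij
      have h2 : i.val ≤ j.val := hij
      omega
  · -- left inverse
    intro f hf
    rw [Finset.mem_filter, Fintype.mem_piFinset] at hf
    obtain ⟨hmem, hmono⟩ := hf
    have hsm : StrictMono (fun i : Fin k => f i + i.val) := by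
      intro i j hij
      show f i + i.val < f j + j.val
      have := hmono i j (le_of_lt hij)
      simp only [Fin.lt_def] at hij
      omega
    have hc : (Finset.image (fun i : Fin k => f i + i.val) Finset.univ).card = k := by
      rw [Finset.card_image_of_injective _ hsm.injective, Finset.card_univ, Fintype.card_fin]
    have heq := (Finset.orderEmbOfFin_unique hc
      (f := fun i : Fin k => f i + i.val)
      (fun x => Finset.mem_image_of_mem _ (Finset.mem_univ x)) hsm).symm
    funext i
    show (Finset.image (fun i : Fin k => f i + i.val) Finset.univ).orderEmbOfFin hc i
        - i.val = f i
    rw [congrFun heq i]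
    omega
  · -- right inverse
    intro s hs
    rw [Finset.mem_powersetCard] at hs
    obtain ⟨hsub, hc⟩ := hs
    show Finset.image (fun i : Fin k => (s.orderEmbOfFin hc i - i.val) + i.val)
        Finset.univ = s
    have hgap := strictMono_gap (s.orderEmbOfFin hc).strictMono
    have hge : ∀ i : Fin k, i.val ≤ s.orderEmbOfFin hc i := by
      intro i
      have h0 : (⟨0, hk⟩ : Fin k) ≤ i := Fin.mk_le_of_le_val (Nat.zero_le _)
      have := hgap ⟨0, hk⟩ i h0
      have hb0 : ((⟨0, hk⟩ : Fin k) : ℕ) = 0 := rfl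
      omega
    have himg : (Finset.image (fun i : Fin k => (s.orderEmbOfFin hc i - i.val) + i.val)
        Finset.univ) = Finset.image (fun i : Fin k => (s.orderEmbOfFin hc i : ℕ))
        Finset.univ := by
      apply Finset.image_congr
      intro i _
      show s.orderEmbOfFin hc i - i.val + i.val = s.orderEmbOfFin hc i
      have := hge i
      omega
    rw [himg]
    apply Finset.eq_of_subset_of_card_le
    · intro x hx
      rcases Finset.mem_image.1 hx with ⟨i, _, rfl⟩
      exact s.orderEmbOfFin_mem hc i
    · rw [hc, Finset.card_image_of_injective _ (s.orderEmbOfFin hc).injective,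
        Finset.card_univ, Fintype.card_fin]

lemma count_monotone_dvd (n k d : ℕ) (hk : 0 < k) (hd : 0 < d) :
    ((Fintype.piFinset (fun _ : Fin k => Finset.Icc 1 n)).filter
      (fun f => (∀ i j : Fin k, i ≤ j → f i ≤ f j) ∧ d ∣ Finset.univ.gcd f)).card
      = (n / d + k - 1).choose k := by
  rw [← count_monotone (n / d) k hk]
  refine Finset.card_bij' (fun f _ => fun i => f i / d) (fun g _ => fun i => d * g i)
    ?_ ?_ ?_ ?_
  · intro f hf
    rw [Finset.mem_filter, Fintype.mem_piFinset] at hf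
    obtain ⟨hmem, hmono, hdvd⟩ := hf
    rw [Finset.dvd_gcd_iff] at hdvd
    refine Finset.mem_filter.2 ⟨Fintype.mem_piFinset.2 ?_, ?_⟩
    · intro i
      have h1 := Finset.mem_Icc.1 (hmem i)
      have h2 := hdvd i (Finset.mem_univ i)
      refine Finset.mem_Icc.2 ⟨?_, ?_⟩
      · show 1 ≤ f i / d
        rw [Nat.one_le_div_iff hd]
        exact Nat.le_of_dvd (by omega) h2
      · show f i / d ≤ n / d
        exact Nat.div_le_div_right h1.2
    · intro i j hij
      show f i / d ≤ f j / d
      exact Nat.div_le_div_right (hmono i j hij)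
  · intro g hg
    rw [Finset.mem_filter, Fintype.mem_piFinset] at hg
    obtain ⟨hmem, hmono⟩ := hg
    refine Finset.mem_filter.2 ⟨Fintype.mem_piFinset.2 ?_, ?_, ?_⟩
    · intro i
      have h1 := Finset.mem_Icc.1 (hmem i)
      refine Finset.mem_Icc.2 ⟨?_, ?_⟩
      · show 1 ≤ d * g i
        exact Nat.one_le_iff_ne_zero.2 (Nat.mul_ne_zero (by omega) (by omega))
      · show d * g i ≤ n
        calc d * g i ≤ d * (n / d) := Nat.mul_le_mul_left d h1.2
          _ ≤ n := Nat.mul_div_le n d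
    · intro i j hij
      show d * g i ≤ d * g j
      exact Nat.mul_le_mul_left d (hmono i j hij)
    · exact Finset.dvd_gcd (fun i _ => Dvd.intro (g i) rfl)
  · intro f hf
    rw [Finset.mem_filter, Fintype.mem_piFinset] at hf
    obtain ⟨hmem, hmono, hdvd⟩ := hf
    rw [Finset.dvd_gcd_iff] at hdvd
    funext i
    show d * (f i / d) = f i
    exact Nat.mul_div_cancel' (hdvd i (Finset.mem_univ i))
  · intro g hg
    funext i
    show d * g i / d = g i
    exact Nat.mul_div_cancel_left _ (by omega)

lemma main_aux (n k : ℕ) (hk : 0 < k) (D : Finset ℕ) (hD : ∀ d ∈ D, 0 < d)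
    (P : ℕ → Prop) [DecidablePred P]
    (hind : ∀ g : ℕ, 0 < g → g ≤ n →
      (if P g then (1 : ℤ) else 0) =
        ∑ d ∈ D, if d ∣ g then (ArithmeticFunction.moebius d : ℤ) else 0) :
    ((((Fintype.piFinset (fun _ : Fin k => Finset.Icc 1 n)).filter
        (fun f => (∀ i j : Fin k, i ≤ j → f i ≤ f j) ∧ P (Finset.univ.gcd f))).card : ℤ)
      = ∑ d ∈ D, ArithmeticFunction.moebius d * ((n / d + k - 1).choose k : ℤ)) := by
  classical
  set M := (Fintype.piFinset (fun _ : Fin k => Finset.Icc 1 n)).filter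
      (fun f => ∀ i j : Fin k, i ≤ j → f i ≤ f j) with hM
  have hsplit : (Fintype.piFinset (fun _ : Fin k => Finset.Icc 1 n)).filter
        (fun f => (∀ i j : Fin k, i ≤ j → f i ≤ f j) ∧ P (Finset.univ.gcd f))
      = M.filter (fun f => P (Finset.univ.gcd f)) := by
    rw [hM, Finset.filter_filter]
  rw [hsplit]
  have hgcd : ∀ f ∈ M, 0 < Finset.univ.gcd f ∧ Finset.univ.gcd f ≤ n := by
    intro f hf
    rw [hM, Finset.mem_filter, Fintype.mem_piFinset] at hf
    have h1 := Finset.mem_Icc.1 (hf.1 ⟨0, hk⟩)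
    have hdvd : Finset.univ.gcd f ∣ f ⟨0, hk⟩ := Finset.gcd_dvd (Finset.mem_univ _)
    constructor
    · rcases Nat.eq_zero_or_pos (Finset.univ.gcd f) with h | h
      · rw [h] at hdvd
        have := Nat.eq_zero_of_zero_dvd hdvd
        omega
      · exact h
    · exact le_trans (Nat.le_of_dvd (by omega) hdvd) h1.2
  calc ((M.filter (fun f => P (Finset.univ.gcd f))).card : ℤ)
      = ∑ f ∈ M, (if P (Finset.univ.gcd f) then (1 : ℤ) else 0) := by
        rw [Finset.card_filter]
        push_cast
        rfl
    _ = ∑ f ∈ M, ∑ d ∈ D,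
          (if d ∣ Finset.univ.gcd f then (ArithmeticFunction.moebius d : ℤ) else 0) :=
        Finset.sum_congr rfl (fun f hf => hind _ (hgcd f hf).1 (hgcd f hf).2)
    _ = ∑ d ∈ D, ∑ f ∈ M,
          (if d ∣ Finset.univ.gcd f then (ArithmeticFunction.moebius d : ℤ) else 0) :=
        Finset.sum_comm
    _ = ∑ d ∈ D, (ArithmeticFunction.moebius d : ℤ) *
          ((M.filter (fun f => d ∣ Finset.univ.gcd f)).card : ℤ) := by
        refine Finset.sum_congr rfl (fun d _ => ?_)
        rw [← Finset.sum_filter, Finset.sum_const, nsmul_eq_mul, mul_comm]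
    _ = ∑ d ∈ D, ArithmeticFunction.moebius d * ((n / d + k - 1).choose k : ℤ) := by
        refine Finset.sum_congr rfl (fun d hd => ?_)
        congr 1
        rw [hM, Finset.filter_filter]
        exact_mod_cast count_monotone_dvd n k d hk (hD d hd)

lemma moebius_divisor_sum (g : ℕ) :
    (∑ e ∈ g.divisors, (ArithmeticFunction.moebius e : ℤ)) = if g = 1 then 1 else 0 := by
  rw [← ArithmeticFunction.coe_mul_zeta_apply, ArithmeticFunction.moebius_mul_coe_zeta,
    ArithmeticFunction.one_apply]



/-- Shonhiwa's formulas for `L_k^m(n)` and `H_k(n)`: for `n ≥ k ≥ 1` and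
`m ≥ 1`, the number of nondecreasing `k`-tuples `1 ≤ a_1 ≤ … ≤ a_k ≤ n` with
`gcd(a_1, …, a_k, m) = 1` equals `Σ_{d ∣ m} μ(d)·C(⌊n/d⌋ + k − 1, k)`, and the
number of nondecreasing `k`-tuples `1 ≤ a_1 ≤ … ≤ a_k ≤ n` with
`gcd(a_1, …, a_k) = 1` equals `Σ_{d=1}^n μ(d)·C(⌊n/d⌋ + k − 1, k)`. -/
theorem card_coprime_monotone_tuples
    (n k m : ℕ) (hk : 0 < k) (hm : 0 < m) (hnk : k ≤ n) :
    ((((Fintype.piFinset (fun _ : Fin k => Finset.Icc 1 n)).filter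
        (fun f => (∀ i j : Fin k, i ≤ j → f i ≤ f j) ∧
          Nat.gcd (Finset.univ.gcd f) m = 1)).card : ℤ) =
      ∑ d ∈ m.divisors,
        ArithmeticFunction.moebius d * ((n / d + k - 1).choose k : ℤ)) ∧
    ((((Fintype.piFinset (fun _ : Fin k => Finset.Icc 1 n)).filter
        (fun f => (∀ i j : Fin k, i ≤ j → f i ≤ f j) ∧
          Finset.univ.gcd f = 1)).card : ℤ) =
      ∑ d ∈ Finset.Icc 1 n,
        ArithmeticFunction.moebius d * ((n / d + k - 1).choose k : ℤ)) := by
  constructor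
  · refine main_aux n k hk m.divisors (fun d hd => Nat.pos_of_mem_divisors hd)
      (fun g => Nat.gcd g m = 1) ?_
    intro g hg hgn
    rw [← moebius_divisor_sum (Nat.gcd g m), ← Finset.sum_filter]
    congr 1
    ext d
    simp only [Nat.mem_divisors, Finset.mem_filter]
    constructor
    · rintro ⟨hd, -⟩
      exact ⟨⟨dvd_trans hd (Nat.gcd_dvd_right g m), by omega⟩,
        dvd_trans hd (Nat.gcd_dvd_left g m)⟩
    · rintro ⟨⟨hdm, -⟩, hdg⟩
      refine ⟨Nat.dvd_gcd hdg hdm, fun h => ?_⟩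
      rw [Nat.gcd_eq_zero_iff] at h
      omega
  · refine main_aux n k hk (Finset.Icc 1 n) (fun d hd => (Finset.mem_Icc.1 hd).1)
      (fun g => g = 1) ?_
    intro g hg hgn
    rw [← moebius_divisor_sum g, ← Finset.sum_filter]
    congr 1
    ext d
    simp only [Nat.mem_divisors, Finset.mem_filter, Finset.mem_Icc]
    constructor
    · rintro ⟨hd, -⟩
      have hd0 : d ≠ 0 := by
        rintro rfl
        have := Nat.eq_zero_of_zero_dvd hd
        omega
      exact ⟨⟨by omega, le_trans (Nat.le_of_dvd hg hd) hgn⟩, hd⟩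
    · rintro ⟨-, hdg⟩
      exact ⟨hdg, by omega⟩
end
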